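/- arXiv:1803.02466 — 9 statements merged into one kernel-verified Lean document; each statement's English description precedes it below -/
import Mathlib

section
/- Fix real numbers ε, Δ, δz with 0 < ε ≤ 1/5, 0 < Δ ≤ π, 0 < δz ≤ Δ/√(2·log(20/ε)), and an integer L ≥ 2 with (L−1)·δz ≥ √(2·log(20/ε)). Then for every real λ with Δ ≤ λ ≤ 2π − Δ, |(δz/√(2π)) · ∑_{l=−L}^{L−1} exp(−(l·δz)²/2) · exp(i·l·λ)| ≤ ε. -/
/-!
Poisson summation (Jacobi's theta transformation) turns the full Gaussian sum over `ℤ`, scaled by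
`δz / √(2π)`, into the periodized Gaussian `∑ₙ exp (-((λ + 2πn) / δz)² / 2)`. Since `λ` stays at
distance `Δ` from `2πℤ`, its terms are dominated by the geometric series
`exp (-(Δ / δz)² / 2) · qⁿ` with `q ≤ 1/2`, and `Δ / δz ≥ √(2 log (20/ε))` makes the leading factor
at most `ε / 20`. The truncation error, the Gaussian tail `|l| ≥ L`, is again geometric with first
term `exp (-s² / 2) = ε / 20` at `s = √(2 log (20/ε)) ≤ (L - 1) δz`, and ratio `exp (-s δz)`.
-/

open Real

lemma summable_exp_neg_int_mul_sq_half {δ : ℝ} (hδ : δ ≠ 0) :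
    Summable fun l : ℤ => exp (-((l : ℝ) * δ) ^ 2 / 2) :=
  (HurwitzKernelBounds.summable_f_int 0 0 (t := δ ^ 2 / (2 * π)) (by positivity)).congr fun l => by
    simp only [HurwitzKernelBounds.f_int, add_zero, pow_zero, one_mul]
    congr 1
    field_simp

lemma exp_neg_sqrt_two_mul_log_sq_half {a : ℝ} (ha : 1 ≤ a) :
    exp (-√(2 * log a) ^ 2 / 2) = a⁻¹ := by
  rw [sq_sqrt (by linarith [log_nonneg ha]), show -(2 * log a) / 2 = -log a by ring, exp_neg,
    exp_log (by linarith)]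

lemma exp_neg_sq_half_le_geometric {x h u : ℝ} (hx : 0 ≤ x) (hh : 0 ≤ h) (n : ℕ)
    (hu : x + n * h ≤ |u|) : exp (-u ^ 2 / 2) ≤ exp (-x ^ 2 / 2) * exp (-(x * h)) ^ n := by
  rw [← exp_nat_mul, ← exp_add, exp_le_exp]
  have hsq : (x + n * h) ^ 2 ≤ u ^ 2 := by
    simpa only [sq_abs] using pow_le_pow_left₀ (by positivity) hu 2
  nlinarith [mul_nonneg (mul_nonneg hx hh) (Nat.cast_nonneg (α := ℝ) n), sq_nonneg ((n : ℝ) * h)]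

lemma summable_exp_neg_sq_half_of_le_abs {x h : ℝ} (hx : 0 < x) (hh : 0 < h) {u : ℕ → ℝ}
    (hu : ∀ n, x + n * h ≤ |u n|) : Summable fun n => exp (-u n ^ 2 / 2) := by
  have hr : exp (-(x * h)) < 1 := exp_lt_one_iff.mpr (by nlinarith [mul_pos hx hh])
  exact .of_nonneg_of_le (fun n => (exp_pos _).le)
    (fun n => exp_neg_sq_half_le_geometric hx.le hh.le n (hu n))
    ((summable_geometric_of_lt_one (exp_pos _).le hr).mul_left _)

lemma tsum_exp_neg_sq_half_le_of_le_abs {x h : ℝ} (hx : 0 < x) (hh : 0 < h) {u : ℕ → ℝ}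
    (hu : ∀ n, x + n * h ≤ |u n|) :
    ∑' n, exp (-u n ^ 2 / 2) ≤ exp (-x ^ 2 / 2) / (1 - exp (-(x * h))) := by
  have hr : exp (-(x * h)) < 1 := exp_lt_one_iff.mpr (by nlinarith [mul_pos hx hh])
  have hgeom := summable_geometric_of_lt_one (exp_pos _).le hr
  calc ∑' n, exp (-u n ^ 2 / 2) ≤ ∑' n : ℕ, exp (-x ^ 2 / 2) * exp (-(x * h)) ^ n :=
        (summable_exp_neg_sq_half_of_le_abs hx hh hu).tsum_le_tsum
          (fun n => exp_neg_sq_half_le_geometric hx.le hh.le n (hu n)) (hgeom.mul_left _)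
    _ = exp (-x ^ 2 / 2) / (1 - exp (-(x * h))) := by
        rw [tsum_mul_left, tsum_geometric_of_lt_one (exp_pos _).le hr, ← div_eq_mul_inv]

lemma tsum_exp_neg_sq_half_le_of_succ_le_abs {x h : ℝ} (hx : 0 < x) (hh : 0 < h) {u : ℕ → ℝ}
    (hu : ∀ n, x + (n + 1) * h ≤ |u n|) :
    ∑' n, exp (-u n ^ 2 / 2) ≤ exp (-x ^ 2 / 2) / (x * h) := by
  have hxh := mul_pos hx hh
  have hr : exp (-(x * h)) < 1 := exp_lt_one_iff.mpr (by linarith)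
  have hr' : exp (-((x + h) * h)) ≤ exp (-(x * h)) := exp_le_exp.mpr (by nlinarith)
  have hshift : exp (-(x + h) ^ 2 / 2) ≤ exp (-x ^ 2 / 2) * exp (-(x * h)) := by
    rw [← exp_add, exp_le_exp]; nlinarith
  have hgeom : exp (-(x * h)) * (x * h) ≤ 1 - exp (-(x * h)) := by
    have := add_one_le_exp (x * h)
    have hinv : exp (-(x * h)) * exp (x * h) = 1 := by rw [← exp_add]; simp
    nlinarith [exp_pos (-(x * h))]
  calc ∑' n, exp (-u n ^ 2 / 2)
      ≤ exp (-(x + h) ^ 2 / 2) / (1 - exp (-((x + h) * h))) :=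
        tsum_exp_neg_sq_half_le_of_le_abs (by linarith) hh fun n => by
          linarith [hu n]
    _ ≤ exp (-x ^ 2 / 2) * exp (-(x * h)) / (1 - exp (-(x * h))) := by
        gcongr
    _ = exp (-x ^ 2 / 2) * (exp (-(x * h)) / (1 - exp (-(x * h)))) := by ring
    _ ≤ exp (-x ^ 2 / 2) * (1 / (x * h)) := by
        refine mul_le_mul_of_nonneg_left ?_ (exp_pos _).le
        rw [div_le_div_iff₀ (by linarith) hxh]; linarith
    _ = exp (-x ^ 2 / 2) / (x * h) := by ring

lemma tsum_exp_neg_sq_half_periodized_le {δ Δ lam : ℝ} (hδ : 0 < δ) (hΔ : 0 < Δ)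
    (hδΔ : δ ^ 2 ≤ 2 * π * Δ) (hlam : Δ ≤ lam) (hlam' : lam ≤ 2 * π - Δ) :
    ∑' n : ℤ, exp (-((lam + 2 * π * n) / δ) ^ 2 / 2) ≤ 4 * exp (-(Δ / δ) ^ 2 / 2) := by
  have hx : 0 < Δ / δ := by positivity
  have hh : 0 < 2 * π / δ := by positivity
  have hratio : exp (-(Δ / δ * (2 * π / δ))) ≤ 1 / 2 := by
    have hxh : 1 ≤ Δ / δ * (2 * π / δ) := by
      rw [div_mul_div_comm, le_div_iff₀ (by positivity)]; linarith
    calc exp (-(Δ / δ * (2 * π / δ))) ≤ exp (-1) := exp_le_exp.mpr (by linarith)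
      _ ≤ 1 / 2 := by
        rw [exp_neg, one_div]
        exact inv_anti₀ two_pos (by linarith [add_one_le_exp (1 : ℝ)])
  have hhalf : exp (-(Δ / δ) ^ 2 / 2) / (1 - exp (-(Δ / δ * (2 * π / δ)))) ≤
      2 * exp (-(Δ / δ) ^ 2 / 2) := by
    rw [div_le_iff₀ (by linarith)]
    nlinarith [mul_le_mul_of_nonneg_left hratio (exp_pos (-(Δ / δ) ^ 2 / 2)).le]
  have hnat : ∀ n : ℕ, Δ / δ + n * (2 * π / δ) ≤ |(lam + 2 * π * ((n : ℤ) : ℝ)) / δ| := by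
    intro n
    push_cast
    calc _ = (Δ + 2 * π * n) / δ := by ring
      _ ≤ (lam + 2 * π * n) / δ := by gcongr
      _ ≤ _ := le_abs_self _
  have hneg : ∀ n : ℕ,
      Δ / δ + n * (2 * π / δ) ≤ |(lam + 2 * π * ((-(n + 1) : ℤ) : ℝ)) / δ| := by
    intro n
    push_cast
    calc _ = (Δ + 2 * π * n) / δ := by ring
      _ ≤ -((lam + 2 * π * -(n + 1)) / δ) := by rw [← neg_div]; gcongr; linarith
      _ ≤ _ := neg_le_abs _
  rw [tsum_of_nat_of_neg_add_one (f := fun n : ℤ => exp (-((lam + 2 * π * n) / δ) ^ 2 / 2))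
    (summable_exp_neg_sq_half_of_le_abs hx hh hnat)
    (summable_exp_neg_sq_half_of_le_abs hx hh hneg)]
  linarith [tsum_exp_neg_sq_half_le_of_le_abs hx hh hnat,
    tsum_exp_neg_sq_half_le_of_le_abs hx hh hneg]

lemma tsum_compl_Icc_int {E : Type*} [NormedAddCommGroup E] [CompleteSpace E] {f : ℤ → E}
    (hf : Summable f) {L : ℤ} (hL : 0 ≤ L) :
    ∑' l : ↑((Finset.Icc (-L) (L - 1) : Finset ℤ) : Set ℤ)ᶜ, f l =
      ∑' n : ℕ, f (L + n) + ∑' n : ℕ, f (-(L + 1 + n)) := by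
  have hcompl : ((Finset.Icc (-L) (L - 1) : Finset ℤ) : Set ℤ)ᶜ =
      Set.range (fun n : ℕ => L + n) ∪ Set.range (fun n : ℕ => -(L + 1 + n)) := by
    ext l
    simp only [Finset.coe_Icc, Set.mem_compl_iff, Set.mem_Icc, Set.mem_union, Set.mem_range]
    constructor
    · intro hl
      by_cases hpos : L ≤ l
      · exact .inl ⟨(l - L).toNat, by omega⟩
      · exact .inr ⟨(-l - L - 1).toNat, by omega⟩
    · rintro (⟨n, rfl⟩ | ⟨n, rfl⟩) <;> omega
  have hdisj :
      Disjoint (Set.range (fun n : ℕ => L + n)) (Set.range (fun n : ℕ => -(L + 1 + n))) := by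
    rw [Set.disjoint_left]
    rintro _ ⟨m, rfl⟩ ⟨n, hn⟩
    dsimp only at hn
    omega
  rw [hcompl, (hf.subtype _).tsum_union_disjoint hdisj (hf.subtype _),
    tsum_range f fun m n h => by simpa using h, tsum_range f fun m n h => by simpa using h]

lemma tsum_compl_Icc_exp_neg_sq_half_le {δ s : ℝ} (hδ : 0 < δ) (hs : 0 < s) {L : ℤ}
    (hL : s ≤ (L - 1) * δ) :
    ∑' l : ↑((Finset.Icc (-L) (L - 1) : Finset ℤ) : Set ℤ)ᶜ, exp (-((l : ℝ) * δ) ^ 2 / 2) ≤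
      2 * (exp (-s ^ 2 / 2) / (s * δ)) := by
  have hL0 : 0 ≤ L := by
    have : (1 : ℝ) < L := by nlinarith
    exact_mod_cast (zero_le_one.trans this.le)
  rw [tsum_compl_Icc_int (summable_exp_neg_int_mul_sq_half hδ.ne') hL0, two_mul]
  refine add_le_add (tsum_exp_neg_sq_half_le_of_succ_le_abs hs hδ fun n => ?_)
    (tsum_exp_neg_sq_half_le_of_succ_le_abs hs hδ fun n => ?_)
  · refine le_abs.mpr (.inl ?_)
    push_cast
    nlinarith
  · refine le_abs.mpr (.inr ?_)
    push_cast
    nlinarith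

noncomputable def gaussExpTerm (δ lam : ℝ) (l : ℤ) : ℂ :=
  (exp (-((l : ℝ) * δ) ^ 2 / 2) : ℂ) * Complex.exp (Complex.I * l * lam)

lemma norm_gaussExpTerm (δ lam : ℝ) (l : ℤ) :
    ‖gaussExpTerm δ lam l‖ = exp (-((l : ℝ) * δ) ^ 2 / 2) := by
  rw [gaussExpTerm, norm_mul, Complex.norm_real, norm_eq_abs, abs_of_pos (exp_pos _),
    Complex.norm_exp]
  simp

lemma summable_gaussExpTerm {δ : ℝ} (hδ : δ ≠ 0) (lam : ℝ) : Summable (gaussExpTerm δ lam) :=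
  Summable.of_norm <| (summable_exp_neg_int_mul_sq_half hδ).congr fun l =>
    (norm_gaussExpTerm δ lam l).symm

lemma gaussian_poisson_summation (δ lam : ℝ) (hδ : 0 < δ) :
    ((δ / √(2 * π) : ℝ) : ℂ) * ∑' l, gaussExpTerm δ lam l =
      ((∑' n : ℤ, exp (-((lam + 2 * π * n) / δ) ^ 2 / 2) : ℝ) : ℂ) := by
  set a : ℝ := δ ^ 2 / (2 * π)
  have ha : 0 < (a : ℂ).re := by rw [Complex.ofReal_re]; positivity
  have hroot : (a : ℂ) ^ (1 / 2 : ℂ) = ((δ / √(2 * π) : ℝ) : ℂ) := by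
    rw [show (1 / 2 : ℂ) = ((1 / 2 : ℝ) : ℂ) by norm_num, ← Complex.ofReal_cpow (by positivity),
      ← sqrt_eq_rpow, sqrt_div (sq_nonneg δ), sqrt_sq hδ.le]
  have H := Complex.tsum_exp_neg_quadratic ha (lam * Complex.I / (2 * π))
  rw [hroot] at H
  have hlhs : ∑' l, gaussExpTerm δ lam l =
      ∑' n : ℤ, Complex.exp (-π * a * n ^ 2 + 2 * π * (lam * Complex.I / (2 * π)) * n) := by
    refine tsum_congr fun n => ?_
    rw [gaussExpTerm, Complex.ofReal_exp, ← Complex.exp_add]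
    congr 1
    push_cast [a]
    field_simp
  have hrhs : ∑' n : ℤ, Complex.exp (-π / a * (n + Complex.I * (lam * Complex.I / (2 * π))) ^ 2) =
      ((∑' n : ℤ, exp (-((lam + 2 * π * n) / δ) ^ 2 / 2) : ℝ) : ℂ) := by
    have hI : Complex.I * (lam * Complex.I / (2 * π)) = -(lam / (2 * π)) := by
      ring_nf; rw [Complex.I_sq]; ring
    rw [Complex.ofReal_tsum, ← (Equiv.neg ℤ).tsum_eq]
    refine tsum_congr fun n => ?_
    rw [Complex.ofReal_exp, hI]
    congr 1
    push_cast [a, Equiv.neg_apply]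
    field_simp
    ring
  have hne : ((δ / √(2 * π) : ℝ) : ℂ) ≠ 0 := Complex.ofReal_ne_zero.mpr (by positivity)
  rw [hlhs, H, hrhs, ← mul_assoc, mul_one_div_cancel hne, one_mul]

lemma norm_mul_tsum_gaussExpTerm_le {δ Δ lam : ℝ} (hδ : 0 < δ) (hΔ : 0 < Δ)
    (hδΔ : δ ^ 2 ≤ 2 * π * Δ) (hlam : Δ ≤ lam) (hlam' : lam ≤ 2 * π - Δ) :
    ‖((δ / √(2 * π) : ℝ) : ℂ) * ∑' l, gaussExpTerm δ lam l‖ ≤ 4 * exp (-(Δ / δ) ^ 2 / 2) := by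
  rw [gaussian_poisson_summation δ lam hδ, Complex.norm_real, norm_eq_abs,
    abs_of_nonneg (tsum_nonneg fun _ => (exp_pos _).le)]
  exact tsum_exp_neg_sq_half_periodized_le hδ hΔ hδΔ hlam hlam'

lemma norm_tsum_compl_Icc_gaussExpTerm_le {δ s : ℝ} (hδ : 0 < δ) (hs : 0 < s) (lam : ℝ)
    {L : ℤ} (hL : s ≤ (L - 1) * δ) :
    ‖∑' l : ↑((Finset.Icc (-L) (L - 1) : Finset ℤ) : Set ℤ)ᶜ, gaussExpTerm δ lam l‖ ≤
      2 * (exp (-s ^ 2 / 2) / (s * δ)) := by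
  refine (norm_tsum_le_tsum_norm ((summable_gaussExpTerm hδ.ne' lam).norm.subtype _)).trans ?_
  simp only [norm_gaussExpTerm]
  exact tsum_compl_Icc_exp_neg_sq_half_le hδ hs hL

theorem stmt_2_general (ε Δ δz lam : ℝ) (L : ℤ)
    (hε : 0 < ε) (hε' : ε ≤ 1 / 5)
    (hΔ : 0 < Δ) (hΔ' : Δ ≤ Real.pi)
    (hδz : 0 < δz) (hδz' : δz ≤ Δ / Real.sqrt (2 * Real.log (20 / ε)))
    (hLδz : Real.sqrt (2 * Real.log (20 / ε)) ≤ ((L : ℝ) - 1) * δz)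
    (hlam : Δ ≤ lam) (hlam' : lam ≤ 2 * Real.pi - Δ) :
    ‖((δz / Real.sqrt (2 * Real.pi) : ℝ) : ℂ) *
      ∑ l ∈ Finset.Icc (-L) (L - 1),
        (Real.exp (-((l : ℝ) * δz) ^ 2 / 2) : ℂ) *
          Complex.exp (Complex.I * l * lam)‖ ≤ ε := by
  have h20 : 100 ≤ 20 / ε := by rw [le_div_iff₀ hε]; linarith
  set s := √(2 * log (20 / ε))
  have hs : 1 ≤ s := one_le_sqrt.mpr <| by
    have : exp 1 ≤ 20 / ε := by linarith [exp_one_lt_d9]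
    linarith [(le_log_iff_exp_le (by positivity)).mpr this]
  have hεs : exp (-s ^ 2 / 2) = ε / 20 := by
    rw [exp_neg_sqrt_two_mul_log_sq_half (by linarith), inv_div]
  have hsδ : s * δz ≤ Δ := by rwa [le_div_iff₀ (by linarith), mul_comm] at hδz'
  have hδΔ : δz ≤ Δ := by nlinarith
  have hfull := norm_mul_tsum_gaussExpTerm_le hδz hΔ
    (by nlinarith [mul_le_mul hδΔ (hδΔ.trans hΔ') hδz.le hΔ.le, pi_pos]) hlam hlam'
  have hdecay : exp (-(Δ / δz) ^ 2 / 2) ≤ ε / 20 := by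
    rw [← hεs]; gcongr; rw [le_div_iff₀ hδz]; linarith
  have htail := norm_tsum_compl_Icc_gaussExpTerm_le hδz (by linarith) lam hLδz
  have hsqrt : 1 ≤ √(2 * π) := one_le_sqrt.mpr (by linarith [pi_gt_three])
  change ‖_ * ∑ l ∈ _, gaussExpTerm δz lam l‖ ≤ ε
  rw [eq_sub_of_add_eq ((summable_gaussExpTerm hδz.ne' lam).sum_add_tsum_compl
    (s := Finset.Icc (-L) (L - 1))), mul_sub]
  calc _ ≤ 4 * (ε / 20) + ‖((δz / √(2 * π) : ℝ) : ℂ)‖ * (2 * (ε / 20 / (s * δz))) := by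
        refine (norm_sub_le _ _).trans (add_le_add (by linarith) ?_)
        rw [norm_mul, ← hεs]; gcongr
    _ = ε / 5 + ε / (10 * s * √(2 * π)) := by
        rw [Complex.norm_real, norm_eq_abs, abs_of_pos (by positivity)]
        field_simp
        ring
    _ ≤ ε := by
        have : ε / (10 * s * √(2 * π)) ≤ ε / 10 :=
          div_le_div_of_nonneg_left hε.le (by norm_num) (by nlinarith)
        linarith

/-- spectral-gap case of Lemma 1: for `0 < ε ≤ 1/5`, `0 < Δ ≤ π`,
`0 < δz ≤ Δ/√(2 log(20/ε))`, an integer `L ≥ 2` with `(L−1)·δz ≥ √(2 log(20/ε))`,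
and any `λ` with `Δ ≤ λ ≤ 2π − Δ`,
`|(δz/√(2π)) ∑_{l=−L}^{L−1} exp(−(l δz)²/2) e^{i l λ}| ≤ ε`. -/
theorem stmt_2 (ε Δ δz lam : ℝ) (L : ℤ)
    (hε : 0 < ε) (hε' : ε ≤ 1 / 5)
    (hΔ : 0 < Δ) (hΔ' : Δ ≤ Real.pi)
    (hδz : 0 < δz) (hδz' : δz ≤ Δ / Real.sqrt (2 * Real.log (20 / ε)))
    (hL : 2 ≤ L) (hLδz : Real.sqrt (2 * Real.log (20 / ε)) ≤ ((L : ℝ) - 1) * δz)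
    (hlam : Δ ≤ lam) (hlam' : lam ≤ 2 * Real.pi - Δ) :
    ‖((δz / Real.sqrt (2 * Real.pi) : ℝ) : ℂ) *
      ∑ l ∈ Finset.Icc (-L) (L - 1),
        (Real.exp (-((l : ℝ) * δz) ^ 2 / 2) : ℂ) *
          Complex.exp (Complex.I * l * lam)‖ ≤ ε :=
  stmt_2_general ε Δ δz lam L hε hε' hΔ hΔ' hδz hδz' hLδz hlam hlam'
end

section
/- Let H be a finite-dimensional complex inner product space and U a unitary operator on H. Fix real numbers ε, Δ, δz with 0 < ε ≤ 1/5, 0 < Δ ≤ π, 0 < δz ≤ Δ/√(2·log(20/ε)), and an integer L ≥ 2 with (L−1)·δz ≥ √(2·log(20/ε)). Set α_l := (δz/√(2π))·exp(−(l·δz)²/2) for l ∈ ℤ. Suppose β_{−L}, …, β_{L−1} are complex numbers such that ‖∑_{l=−L}^{L−1} (α_l − |β_l|/2) U^l ξ‖ ≤ ε for every unit vector ξ ∈ H. Then: (i) for every unit vector ψ₀ ∈ H with U ψ₀ = ψ₀, ‖∑_{l=−L}^{L−1} (|β_l|/2) U^l ψ₀ − ψ₀‖ ≤ 2ε; and (ii)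 for every unit vector ψ ∈ H with U ψ = e^{iλ} ψ for some real λ satisfying Δ ≤ λ ≤ 2π − Δ, ‖∑_{l=−L}^{L−1} (|β_l|/2) U^l ψ‖ ≤ 2ε. -/
/-!
By Poisson summation (Jacobi's theta transformation), the Fourier series `∑ₗ αₗ e^{ilλ}` of the
sampled Gaussian equals the periodized Gaussian `∑ₖ exp (-(λ - 2πk)² / (2δz²))`. For
`0 ≤ λ ≤ 2π - Δ` the term of index `k ≠ 0` is at most `q ^ |k|` with
`q = exp (-Δ² / (2δz²)) ≤ ε / 20`, so the series is within `ε / 5` of `exp (-λ² / (2δz²))`, which is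
`1` at `λ = 0` and at most `ε / 20` for `λ ≥ Δ`. Truncating to `-L ≤ l < L` costs a Gaussian tail,
dominated by a geometric series, of at most `ε / 10`. On an eigenvector with eigenvalue `e^{iλ}`,
`∑ cₗ Uˡ` acts as the scalar `∑ cₗ e^{ilλ}`, and the hypothesis on `β` moves the coefficients from
`αₗ` to `|βₗ| / 2` at the cost of another `ε`.
-/

open Complex Finset Real

namespace LinearIsometryEquiv

section

variable {𝕜 E : Type*} [Field 𝕜] [SeminormedAddCommGroup E] [Module 𝕜 E]

theorem zpow_apply_of_apply_eq_smul (U : E ≃ₗᵢ[𝕜] E) {ψ : E} {c : 𝕜} (hc : c ≠ 0)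
    (h : U ψ = c • ψ) (l : ℤ) : (U ^ l) ψ = c ^ l • ψ := by
  have hinv : U⁻¹ ψ = c⁻¹ • ψ := by
    rw [coe_inv, eq_inv_smul_iff₀ hc, ← map_smul, ← h, symm_apply_apply]
  induction l using Int.induction_on with
  | zero => simp
  | succ n ih =>
    rw [zpow_add_one, zpow_add_one₀ hc, coe_mul, Function.comp_apply, h, map_smul, ih, smul_smul,
      mul_comm]
  | pred n ih =>
    rw [zpow_sub_one, zpow_sub_one₀ hc, coe_mul, Function.comp_apply, hinv, map_smul, ih, smul_smul,
      mul_comm]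

theorem sum_smul_zpow_apply_of_apply_eq_smul (U : E ≃ₗᵢ[𝕜] E) {ψ : E} {c : 𝕜} (hc : c ≠ 0)
    (h : U ψ = c • ψ) (s : Finset ℤ) (a : ℤ → 𝕜) :
    ∑ l ∈ s, a l • (U ^ l) ψ = (∑ l ∈ s, a l * c ^ l) • ψ := by
  simp only [U.zpow_apply_of_apply_eq_smul hc h, smul_smul, sum_smul]

end

theorem norm_sum_smul_zpow_apply_sub_le {E : Type*} [NormedAddCommGroup E] [NormedSpace ℂ E]
    (U : E ≃ₗᵢ[ℂ] E) {ψ : E} {c : ℂ} (hψ : ‖ψ‖ = 1) (hc : c ≠ 0) (h : U ψ = c • ψ)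
    (s : Finset ℤ) (a b : ℤ → ℝ) (v : ℂ) :
    ‖∑ l ∈ s, (b l : ℂ) • (U ^ l) ψ - v • ψ‖
      ≤ ‖∑ l ∈ s, ((a l - b l : ℝ) : ℂ) • (U ^ l) ψ‖ + ‖∑ l ∈ s, (a l : ℂ) * c ^ l - v‖ := by
  simp only [U.sum_smul_zpow_apply_of_apply_eq_smul hc h, ← sub_smul, norm_smul, hψ, mul_one]
  calc ‖∑ l ∈ s, (b l : ℂ) * c ^ l - v‖
      = ‖(∑ l ∈ s, (a l : ℂ) * c ^ l - v) - ∑ l ∈ s, ((a l - b l : ℝ) : ℂ) * c ^ l‖ := by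
        push_cast
        simp only [sub_mul, sum_sub_distrib]
        congr 1
        ring
    _ ≤ _ := (norm_sub_le _ _).trans_eq (add_comm _ _)

end LinearIsometryEquiv

theorem Finset.sum_Icc_neg_eq_sum_range {M : Type*} [AddCommMonoid M] (f : ℤ → M) (N : ℕ) :
    ∑ l ∈ Icc (-(N : ℤ)) (N - 1), f l = ∑ n ∈ range N, (f n + f (-(n + 1))) := by
  induction N with
  | zero => simp
  | succ N ih =>
    have hIcc : Icc (-((N + 1 : ℕ) : ℤ)) ((N + 1 : ℕ) - 1)
        = insert (N : ℤ) (insert (-(N + 1 : ℤ)) (Icc (-(N : ℤ)) (N - 1))) := by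
      ext l; simp only [mem_Icc, mem_insert]; omega
    rw [hIcc, sum_insert (by simp only [mem_insert, mem_Icc]; omega),
      sum_insert (by simp only [mem_Icc]; omega), sum_range_succ, ih]
    abel

theorem tsum_sub_sum_Icc_neg_eq {G : Type*} [AddCommGroup G] [TopologicalSpace G]
    [IsTopologicalAddGroup G] [T2Space G] {f : ℤ → G} (hf : Summable f) (N : ℕ) :
    ∑' l, f l - ∑ l ∈ Icc (-(N : ℤ)) (N - 1), f l
      = ∑' n : ℕ, (f (n + N : ℕ) + f (-((n + N : ℕ) + 1))) := by
  rw [← tsum_nat_add_neg_add_one hf, sum_Icc_neg_eq_sum_range,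
    ← (hf.nat_add_neg_add_one).sum_add_tsum_nat_add N, add_sub_cancel_left]

theorem norm_tsum_sub_apply_zero_le {E : Type*} [NormedAddCommGroup E] [CompleteSpace E]
    {h : ℤ → E} {r : ℝ} (hr0 : 0 ≤ r) (hr1 : r < 1) (hh : ∀ k ≠ 0, ‖h k‖ ≤ r ^ k.natAbs) :
    ‖∑' k, h k - h 0‖ ≤ 2 * (r * (1 - r)⁻¹) := by
  have hgeom : HasSum (fun n : ℕ ↦ r ^ (n + 1)) (r * (1 - r)⁻¹) := by
    simpa only [pow_succ'] using (hasSum_geometric_of_lt_one hr0 hr1).mul_left r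
  have hpos (n : ℕ) : ‖h (n + 1)‖ ≤ r ^ (n + 1) := hh _ (by omega)
  have hneg (n : ℕ) : ‖h (-(n + 1))‖ ≤ r ^ (n + 1) := hh _ (by omega)
  have hsum := (hgeom.summable.of_norm_bounded hpos).hasSum.of_add_one_of_neg_add_one
    (hgeom.summable.of_norm_bounded hneg).hasSum
  rw [hsum.tsum_eq, add_sub_right_comm, add_sub_cancel_right, two_mul]
  exact (norm_add_le _ _).trans
    (add_le_add (tsum_of_norm_bounded hgeom hpos) (tsum_of_norm_bounded hgeom hneg))

theorem Real.exp_neg_sq_div_le_pow {Δ t σ : ℝ} {n : ℕ} (hΔ : 0 ≤ Δ) (ht : n * Δ ≤ |t|) :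
    Real.exp (-t ^ 2 / (2 * σ ^ 2)) ≤ Real.exp (-Δ ^ 2 / (2 * σ ^ 2)) ^ n := by
  have hn : (n : ℝ) ≤ n ^ 2 := by exact_mod_cast Nat.le_self_pow two_ne_zero n
  have hsq : (n * Δ) ^ 2 ≤ t ^ 2 := by
    simpa only [sq_abs] using pow_le_pow_left₀ (by positivity) ht 2
  rw [← Real.exp_nat_mul, Real.exp_le_exp, mul_div_assoc', mul_neg, neg_div, neg_div,
    neg_le_neg_iff]
  gcongr
  calc n * Δ ^ 2 ≤ n ^ 2 * Δ ^ 2 := by gcongr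
    _ ≤ t ^ 2 := by rwa [← mul_pow]

theorem Real.inv_one_sub_exp_neg_le {x : ℝ} (hx : 0 < x) : (1 - Real.exp (-x))⁻¹ ≤ 1 + x⁻¹ := by
  have h : Real.exp (-x) ≤ (1 + x)⁻¹ := by
    rw [Real.exp_neg]
    exact inv_anti₀ (by positivity) (by linarith [Real.add_one_le_exp x])
  calc (1 - Real.exp (-x))⁻¹ ≤ (1 - (1 + x)⁻¹)⁻¹ :=
        inv_anti₀ (by rw [sub_pos, inv_lt_one₀ (by positivity)]; linarith) (by linarith)
    _ = 1 + x⁻¹ := by field_simp [hx.ne']; ring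

theorem two_le_sqrt_two_mul_log_twenty_div {ε : ℝ} (hε : 0 < ε) (hε' : ε ≤ 1 / 5) :
    2 ≤ √(2 * Real.log (20 / ε)) := by
  have h100 : 100 ≤ 20 / ε := by rw [le_div_iff₀ hε]; linarith
  have hlog : 2 ≤ Real.log (20 / ε) := by
    rw [Real.le_log_iff_exp_le (by linarith)]
    calc Real.exp 2 = Real.exp 1 ^ 2 := by rw [← Real.exp_nat_mul]; norm_num
      _ ≤ 2.7182818286 ^ 2 := by gcongr; exact Real.exp_one_lt_d9.le
      _ ≤ 20 / ε := by linarith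
  rw [show (2 : ℝ) = √(2 ^ 2) by rw [sqrt_sq zero_le_two]]
  exact sqrt_le_sqrt (by linarith)

theorem exp_neg_sq_div_two_le_of_sqrt_le {ε s : ℝ} (hε : 0 < ε) (hε' : ε ≤ 20)
    (hs : √(2 * Real.log (20 / ε)) ≤ s) : Real.exp (-s ^ 2 / 2) ≤ ε / 20 := by
  have hlog : 0 ≤ Real.log (20 / ε) := Real.log_nonneg (by rw [le_div_iff₀ hε]; linarith)
  have hsq : 2 * Real.log (20 / ε) ≤ s ^ 2 := by
    simpa only [sq_sqrt (by positivity : 0 ≤ 2 * Real.log (20 / ε))] using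
      pow_le_pow_left₀ (sqrt_nonneg _) hs 2
  calc Real.exp (-s ^ 2 / 2) ≤ Real.exp (-Real.log (20 / ε)) := by
        rw [Real.exp_le_exp]; linarith
    _ = ε / 20 := by rw [Real.exp_neg, Real.exp_log (by positivity), inv_div]

theorem exp_neg_sq_div_le_of_le_abs {ε Δ δ t : ℝ} (hε : 0 < ε) (hε' : ε ≤ 1 / 5) (hδ : 0 < δ)
    (hδ' : δ ≤ Δ / √(2 * Real.log (20 / ε))) (ht : Δ ≤ |t|) :
    Real.exp (-t ^ 2 / (2 * δ ^ 2)) ≤ ε / 20 := by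
  have hT := two_le_sqrt_two_mul_log_twenty_div hε hε'
  rw [show -t ^ 2 / (2 * δ ^ 2) = -(|t| / δ) ^ 2 / 2 by rw [div_pow, sq_abs]; field_simp]
  refine exp_neg_sq_div_two_le_of_sqrt_le hε (by linarith) ?_
  rw [le_div_iff₀ hδ]
  rw [le_div_iff₀ (by linarith)] at hδ'
  linarith

noncomputable def gaussCoeff (δ : ℝ) (l : ℤ) : ℝ :=
  δ / √(2 * π) * Real.exp (-((l : ℝ) * δ) ^ 2 / 2)

section gaussCoeff

variable {δ : ℝ}

theorem gaussCoeff_nonneg (hδ : 0 ≤ δ) (l : ℤ) : 0 ≤ gaussCoeff δ l := by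
  unfold gaussCoeff; positivity

theorem gaussCoeff_neg (l : ℤ) : gaussCoeff δ (-l) = gaussCoeff δ l := by
  simp only [gaussCoeff, Int.cast_neg, neg_mul, even_two, Even.neg_pow]

theorem gaussCoeff_add_le (hδ : 0 ≤ δ) (n m : ℕ) :
    gaussCoeff δ (n + m : ℕ) ≤ gaussCoeff δ m * Real.exp (-((2 * m + 1) * δ ^ 2 / 2)) ^ n := by
  have hn : (n : ℝ) ≤ n ^ 2 := by exact_mod_cast Nat.le_self_pow two_ne_zero n
  rw [gaussCoeff, gaussCoeff, mul_assoc, ← Real.exp_nat_mul, ← Real.exp_add]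
  gcongr
  push_cast
  nlinarith [sq_nonneg δ]

theorem summable_gaussCoeff (hδ : 0 < δ) : Summable (gaussCoeff δ) := by
  have hρ : Real.exp (-((2 * (0 : ℕ) + 1) * δ ^ 2 / 2)) < 1 := by
    rw [Real.exp_lt_one_iff, neg_lt_zero]; positivity
  have hnat : Summable fun n : ℕ ↦ gaussCoeff δ n :=
    ((summable_geometric_of_lt_one (Real.exp_pos _).le hρ).mul_left _).of_nonneg_of_le
      (fun n ↦ gaussCoeff_nonneg hδ.le n) (gaussCoeff_add_le hδ.le · 0)
  exact .of_nat_of_neg hnat (by simpa only [gaussCoeff_neg] using hnat)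

theorem norm_gaussCoeff_mul_cexp_zpow (hδ : 0 ≤ δ) (lam : ℝ) (l : ℤ) :
    ‖(gaussCoeff δ l : ℂ) * cexp (I * lam) ^ l‖ = gaussCoeff δ l := by
  rw [norm_mul, norm_zpow, mul_comm I, norm_exp_ofReal_mul_I, one_zpow, mul_one, norm_real,
    norm_of_nonneg (gaussCoeff_nonneg hδ l)]

theorem norm_tsum_sub_sum_Icc_gaussCoeff_le (hδ : 0 < δ) (lam : ℝ) (N : ℕ) :
    ‖∑' l : ℤ, (gaussCoeff δ l : ℂ) * cexp (I * lam) ^ l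
        - ∑ l ∈ Icc (-(N : ℤ)) (N - 1), (gaussCoeff δ l : ℂ) * cexp (I * lam) ^ l‖
      ≤ 2 * gaussCoeff δ N * (1 - Real.exp (-((2 * N + 1) * δ ^ 2 / 2)))⁻¹ := by
  set ρ := Real.exp (-((2 * N + 1) * δ ^ 2 / 2))
  have hρ : ρ < 1 := by rw [Real.exp_lt_one_iff, neg_lt_zero]; positivity
  have hsum : Summable fun l : ℤ ↦ (gaussCoeff δ l : ℂ) * cexp (I * lam) ^ l :=
    .of_norm <| (summable_gaussCoeff hδ).congr fun l ↦
      (norm_gaussCoeff_mul_cexp_zpow hδ.le lam l).symm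
  rw [tsum_sub_sum_Icc_neg_eq hsum N]
  refine tsum_of_norm_bounded ((hasSum_geometric_of_lt_one (Real.exp_pos _).le hρ).mul_left _)
    fun n ↦ ?_
  have hnext : gaussCoeff δ ((n + N : ℕ) + 1) ≤ gaussCoeff δ N * ρ ^ n := by
    calc gaussCoeff δ ((n + N : ℕ) + 1) = gaussCoeff δ ((n + 1) + N : ℕ) := by
          congr 1; push_cast; ring
      _ ≤ gaussCoeff δ N * ρ ^ (n + 1) := gaussCoeff_add_le hδ.le _ _
      _ ≤ gaussCoeff δ N * ρ ^ n := mul_le_mul_of_nonneg_left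
        (pow_le_pow_of_le_one (Real.exp_pos _).le hρ.le n.le_succ) (gaussCoeff_nonneg hδ.le N)
  calc _ ≤ gaussCoeff δ (n + N : ℕ) + gaussCoeff δ ((n + N : ℕ) + 1) := by
        refine (norm_add_le _ _).trans_eq ?_
        rw [norm_gaussCoeff_mul_cexp_zpow hδ.le, norm_gaussCoeff_mul_cexp_zpow hδ.le,
          gaussCoeff_neg]
    _ ≤ 2 * gaussCoeff δ N * ρ ^ n := by linarith [gaussCoeff_add_le hδ.le n N]

theorem two_mul_gaussCoeff_mul_inv_le {η : ℝ} {N : ℕ} (hδ : 0 < δ) (hδπ : 2 * δ ≤ π)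
    (hN : 2 ≤ N * δ) (hη : Real.exp (-(N * δ) ^ 2 / 2) ≤ η) :
    2 * gaussCoeff δ N * (1 - Real.exp (-((2 * N + 1) * δ ^ 2 / 2)))⁻¹ ≤ 2 * η := by
  have h2π : 2.5 ≤ √(2 * π) := by
    rw [show (2.5 : ℝ) = √(2.5 ^ 2) by rw [sqrt_sq (by norm_num)]]
    exact sqrt_le_sqrt (by nlinarith [pi_gt_d2])
  have hx : 0 < (2 * N + 1) * δ ^ 2 / 2 := by positivity
  have hstep : δ * (1 + ((2 * N + 1) * δ ^ 2 / 2)⁻¹) ≤ √(2 * π) := by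
    have : ((2 * N + 1) * δ ^ 2 / 2)⁻¹ * δ ≤ 1 / 2 := by
      rw [inv_mul_le_iff₀ hx]; nlinarith
    nlinarith [pi_lt_d2]
  have hα : gaussCoeff δ N ≤ δ / √(2 * π) * η := by
    rw [gaussCoeff, Int.cast_natCast]; gcongr
  have hinv := Real.inv_one_sub_exp_neg_le hx
  have hinv0 : 0 ≤ (1 - Real.exp (-((2 * N + 1) * δ ^ 2 / 2)))⁻¹ := by
    rw [inv_nonneg, sub_nonneg, Real.exp_le_one_iff, neg_nonpos]; exact hx.le
  calc 2 * gaussCoeff δ N * (1 - Real.exp (-((2 * N + 1) * δ ^ 2 / 2)))⁻¹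
      ≤ 2 * (δ / √(2 * π) * η) * (1 + ((2 * N + 1) * δ ^ 2 / 2)⁻¹) := by
        gcongr
        exact mul_nonneg zero_le_two ((gaussCoeff_nonneg hδ.le N).trans hα)
    _ = 2 * η * (δ * (1 + ((2 * N + 1) * δ ^ 2 / 2)⁻¹) / √(2 * π)) := by ring
    _ ≤ 2 * η := mul_le_of_le_one_right (mul_nonneg zero_le_two ((Real.exp_pos _).le.trans hη))
        ((div_le_one (by positivity)).2 hstep)

theorem tsum_gaussCoeff_mul_cexp_zpow (hδ : 0 < δ) (lam : ℝ) :
    ∑' l : ℤ, (gaussCoeff δ l : ℂ) * cexp (I * lam) ^ l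
      = ∑' k : ℤ, (Real.exp (-(lam - 2 * π * k) ^ 2 / (2 * δ ^ 2)) : ℂ) := by
  obtain ⟨a, ha⟩ : ∃ a : ℝ, a = δ ^ 2 / (2 * π) := ⟨_, rfl⟩
  obtain ⟨b, hb⟩ : ∃ b : ℂ, b = I * lam / (2 * π) := ⟨_, rfl⟩
  have hnorm : ((δ / √(2 * π) : ℝ) : ℂ) * (1 / (a : ℂ) ^ (1 / 2 : ℂ)) = 1 := by
    have hsqrt : (a : ℂ) ^ (1 / 2 : ℂ) = ((δ / √(2 * π) : ℝ) : ℂ) := by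
      have : δ / √(2 * π) = (δ ^ 2 / (2 * π)) ^ (1 / 2 : ℝ) := by
        rw [← sqrt_eq_rpow, sqrt_div' _ (by positivity), sqrt_sq hδ.le]
      rw [this, ofReal_cpow (by positivity), ha]
      norm_num
    rw [hsqrt, mul_one_div_cancel (ofReal_ne_zero.mpr (by positivity))]
  calc ∑' l : ℤ, (gaussCoeff δ l : ℂ) * cexp (I * lam) ^ l
      = ∑' l : ℤ, ((δ / √(2 * π) : ℝ) : ℂ) * cexp (-π * a * l ^ 2 + 2 * π * b * l) := by
        refine tsum_congr fun l ↦ ?_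
        rw [gaussCoeff, ← exp_int_mul, ofReal_mul, ofReal_exp, mul_assoc, ← Complex.exp_add]
        congr 2
        rw [ha, hb]
        push_cast
        field_simp
    _ = ∑' n : ℤ, cexp (-π / a * (n + I * b) ^ 2) := by
        rw [tsum_mul_left, tsum_exp_neg_quadratic (by rw [ofReal_re, ha]; positivity),
          ← mul_assoc, hnorm, one_mul]
    _ = ∑' k : ℤ, (Real.exp (-(lam - 2 * π * k) ^ 2 / (2 * δ ^ 2)) : ℂ) := by
        refine tsum_congr fun k ↦ ?_
        rw [ofReal_exp]
        congr 1
        rw [ha, hb]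
        push_cast
        field_simp
        rw [I_sq]
        ring

end gaussCoeff

theorem natAbs_mul_le_abs_sub_two_pi_mul {Δ lam : ℝ} (h0 : 0 ≤ lam) (h2π : lam ≤ 2 * π - Δ)
    {k : ℤ} (hk : k ≠ 0) : k.natAbs * Δ ≤ |lam - 2 * π * k| := by
  rw [Nat.cast_natAbs, Int.cast_abs, le_abs]
  rcases hk.lt_or_gt with hk | hk
  · have hk' : (k : ℝ) ≤ -1 := by exact_mod_cast Int.le_sub_one_of_lt hk
    left
    rw [abs_of_neg (by linarith)]
    nlinarith
  · have hk' : (1 : ℝ) ≤ k := by exact_mod_cast hk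
    right
    rw [abs_of_pos (by linarith)]
    nlinarith

theorem norm_tsum_exp_sub_le {δ Δ lam : ℝ} (hδ : 0 < δ) (hΔ : 0 < Δ) (h0 : 0 ≤ lam)
    (h2π : lam ≤ 2 * π - Δ) :
    ‖∑' k : ℤ, (Real.exp (-(lam - 2 * π * k) ^ 2 / (2 * δ ^ 2)) : ℂ)
        - Real.exp (-lam ^ 2 / (2 * δ ^ 2))‖
      ≤ 2 * (Real.exp (-Δ ^ 2 / (2 * δ ^ 2)) * (1 - Real.exp (-Δ ^ 2 / (2 * δ ^ 2)))⁻¹) := by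
  have hq : Real.exp (-Δ ^ 2 / (2 * δ ^ 2)) < 1 := by
    rw [Real.exp_lt_one_iff, neg_div, neg_lt_zero]; positivity
  have := norm_tsum_sub_apply_zero_le (Real.exp_pos _).le hq fun k hk ↦ by
    rw [norm_real, norm_of_nonneg (Real.exp_pos _).le]
    exact Real.exp_neg_sq_div_le_pow hΔ.le (natAbs_mul_le_abs_sub_two_pi_mul h0 h2π hk)
  simpa only [Int.cast_zero, mul_zero, sub_zero] using this

theorem norm_sum_Icc_gaussCoeff_mul_cexp_zpow_sub_le {ε Δ δ lam : ℝ} {L : ℤ} (hε : 0 < ε)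
    (hε' : ε ≤ 1 / 5) (hΔ : 0 < Δ) (hΔ' : Δ ≤ π) (hδ : 0 < δ)
    (hδ' : δ ≤ Δ / √(2 * Real.log (20 / ε))) (hL : 0 ≤ L)
    (hLδ : √(2 * Real.log (20 / ε)) ≤ (L - 1) * δ) (h0 : 0 ≤ lam) (h2π : lam ≤ 2 * π - Δ) :
    ‖∑ l ∈ Icc (-L) (L - 1), (gaussCoeff δ l : ℂ) * cexp (I * lam) ^ l
        - Real.exp (-lam ^ 2 / (2 * δ ^ 2))‖ ≤ ε / 2 := by
  lift L to ℕ using hL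
  push_cast at hLδ
  have hT := two_le_sqrt_two_mul_log_twenty_div hε hε'
  have hTδ : √(2 * Real.log (20 / ε)) * δ ≤ Δ := by
    rwa [le_div_iff₀ (by linarith), mul_comm] at hδ'
  have htrunc := two_mul_gaussCoeff_mul_inv_le hδ (by nlinarith) (by nlinarith)
    (exp_neg_sq_div_two_le_of_sqrt_le hε (by linarith) (by nlinarith : _ ≤ (L : ℝ) * δ))
  have hq := exp_neg_sq_div_le_of_le_abs hε hε' hδ hδ' (le_abs_self Δ)
  have hgeom : Real.exp (-Δ ^ 2 / (2 * δ ^ 2)) * (1 - Real.exp (-Δ ^ 2 / (2 * δ ^ 2)))⁻¹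
      ≤ ε / 10 := by
    rw [← div_eq_mul_inv, div_le_iff₀ (by linarith)]
    nlinarith
  calc _ ≤ ‖∑ l ∈ Icc (-(L : ℤ)) (L - 1), (gaussCoeff δ l : ℂ) * cexp (I * lam) ^ l
          - ∑' l : ℤ, (gaussCoeff δ l : ℂ) * cexp (I * lam) ^ l‖
        + ‖∑' l : ℤ, (gaussCoeff δ l : ℂ) * cexp (I * lam) ^ l
          - Real.exp (-lam ^ 2 / (2 * δ ^ 2))‖ := norm_sub_le_norm_sub_add_norm_sub _ _ _
    _ ≤ 2 * (ε / 20) + 2 * (ε / 10) := by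
        gcongr
        · rw [norm_sub_rev]
          exact (norm_tsum_sub_sum_Icc_gaussCoeff_le hδ lam L).trans htrunc
        · rw [tsum_gaussCoeff_mul_cexp_zpow hδ]
          exact (norm_tsum_exp_sub_le hδ hΔ h0 h2π).trans (by linarith)
    _ ≤ ε / 2 := by linarith

theorem stmt_4_general {H : Type*} [NormedAddCommGroup H] [InnerProductSpace ℂ H]
    (U : H ≃ₗᵢ[ℂ] H)
    (ε Δ δz : ℝ) (L : ℤ) (β : ℤ → ℂ)
    (hε : 0 < ε) (hε' : ε ≤ 1 / 5)
    (hΔ : 0 < Δ) (hΔ' : Δ ≤ Real.pi)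
    (hδz : 0 < δz) (hδz' : δz ≤ Δ / Real.sqrt (2 * Real.log (20 / ε)))
    (hL : 2 ≤ L) (hLδz : Real.sqrt (2 * Real.log (20 / ε)) ≤ ((L : ℝ) - 1) * δz)
    (hβ : ∀ ξ : H, ‖ξ‖ = 1 →
      ‖∑ l ∈ Finset.Icc (-L) (L - 1),
          ((δz / Real.sqrt (2 * Real.pi) * Real.exp (-((l : ℝ) * δz) ^ 2 / 2) -
              ‖β l‖ / 2 : ℝ) : ℂ) • (U ^ l) ξ‖ ≤ ε) :
    (∀ ψ₀ : H, ‖ψ₀‖ = 1 → U ψ₀ = ψ₀ →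
      ‖(∑ l ∈ Finset.Icc (-L) (L - 1),
          ((‖β l‖ / 2 : ℝ) : ℂ) • (U ^ l) ψ₀) - ψ₀‖ ≤ 2 * ε) ∧
    (∀ (ψ : H) (lam : ℝ), ‖ψ‖ = 1 → Δ ≤ lam → lam ≤ 2 * Real.pi - Δ →
      U ψ = Complex.exp (Complex.I * lam) • ψ →
      ‖∑ l ∈ Finset.Icc (-L) (L - 1),
          ((‖β l‖ / 2 : ℝ) : ℂ) • (U ^ l) ψ‖ ≤ 2 * ε) := by
  have hmain (ψ : H) (lam : ℝ) (hψ : ‖ψ‖ = 1) (h0 : 0 ≤ lam) (h2π : lam ≤ 2 * π - Δ)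
      (hU : U ψ = cexp (I * lam) • ψ) :
      ‖∑ l ∈ Icc (-L) (L - 1), ((‖β l‖ / 2 : ℝ) : ℂ) • (U ^ l) ψ
        - (Real.exp (-lam ^ 2 / (2 * δz ^ 2)) : ℂ) • ψ‖ ≤ ε + ε / 2 :=
    (U.norm_sum_smul_zpow_apply_sub_le hψ (Complex.exp_ne_zero _) hU _ (gaussCoeff δz) _ _).trans
      (add_le_add (hβ ψ hψ) (norm_sum_Icc_gaussCoeff_mul_cexp_zpow_sub_le hε hε' hΔ hΔ' hδz hδz'
        (by omega) hLδz h0 h2π))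
  refine ⟨fun ψ₀ hψ₀ hU ↦ ?_, fun ψ lam hψ hΔlam hlam hU ↦ ?_⟩
  · have := hmain ψ₀ 0 hψ₀ le_rfl (by linarith [pi_pos]) (by simpa using hU)
    simp only [zero_pow two_ne_zero, neg_zero, zero_div, Real.exp_zero, ofReal_one, one_smul]
      at this
    linarith
  · have hg := exp_neg_sq_div_le_of_le_abs hε hε' hδz hδz' (hΔlam.trans (le_abs_self lam))
    calc _ ≤ _ := norm_le_norm_sub_add _ ((Real.exp (-lam ^ 2 / (2 * δz ^ 2)) : ℂ) • ψ)
      _ ≤ ε + ε / 2 + ε / 20 := by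
        gcongr
        · exact hmain ψ lam hψ (by linarith) hlam hU
        · rw [norm_smul, hψ, mul_one, norm_real, norm_of_nonneg (Real.exp_pos _).le]; exact hg
      _ ≤ 2 * ε := by linarith

/-- Corollary 2: replacing the exact Gaussian coefficients `α_l` by nearby
nonnegative coefficients `|β_l|/2` preserves the approximate action on eigenvectors,
up to a doubled error. -/
theorem stmt_4 {H : Type*} [NormedAddCommGroup H] [InnerProductSpace ℂ H]
    [FiniteDimensional ℂ H] (U : H ≃ₗᵢ[ℂ] H)
    (ε Δ δz : ℝ) (L : ℤ) (β : ℤ → ℂ)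
    (hε : 0 < ε) (hε' : ε ≤ 1 / 5)
    (hΔ : 0 < Δ) (hΔ' : Δ ≤ Real.pi)
    (hδz : 0 < δz) (hδz' : δz ≤ Δ / Real.sqrt (2 * Real.log (20 / ε)))
    (hL : 2 ≤ L) (hLδz : Real.sqrt (2 * Real.log (20 / ε)) ≤ ((L : ℝ) - 1) * δz)
    (hβ : ∀ ξ : H, ‖ξ‖ = 1 →
      ‖∑ l ∈ Finset.Icc (-L) (L - 1),
          ((δz / Real.sqrt (2 * Real.pi) * Real.exp (-((l : ℝ) * δz) ^ 2 / 2) -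
              ‖β l‖ / 2 : ℝ) : ℂ) • (U ^ l) ξ‖ ≤ ε) :
    (∀ ψ₀ : H, ‖ψ₀‖ = 1 → U ψ₀ = ψ₀ →
      ‖(∑ l ∈ Finset.Icc (-L) (L - 1),
          ((‖β l‖ / 2 : ℝ) : ℂ) • (U ^ l) ψ₀) - ψ₀‖ ≤ 2 * ε) ∧
    (∀ (ψ : H) (lam : ℝ), ‖ψ‖ = 1 → Δ ≤ lam → lam ≤ 2 * Real.pi - Δ →
      U ψ = Complex.exp (Complex.I * lam) • ψ →
      ‖∑ l ∈ Finset.Icc (-L) (L - 1),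
          ((‖β l‖ / 2 : ℝ) : ℂ) • (U ^ l) ψ‖ ≤ 2 * ε) :=
  stmt_4_general U ε Δ δz L β hε hε' hΔ hΔ' hδz hδz' hL hLδz hβ
end

section
/- Let 0 < ε ≤ 1/5, let c ≥ 1 be real, and let δz be a real number with 0 < δz ≤ π/√(log(c/ε)). Then ∑_{k∈ℤ, k≠0} exp(−(2πk/δz)²/2) ≤ 2ε²/(c² − ε²). -/
/-!
Put `L = log (c / ε)`. The bound on `δz` says `L δz² ≤ π²`, so for every integer `k`
`(2πk/δz)²/2 ≥ 2Lk² ≥ 2L|k|`, and the `k`-th term is at most `q^|k|` with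
`q = e^{-2L} = (ε/c)²`. Summing the two-sided geometric series over `k ≠ 0` gives
`2q/(1 - q) = 2ε²/(c² - ε²)`.
-/

open Real

theorem HasSum.subtype_ne {α β : Type*} [AddCommGroup α] [TopologicalSpace α]
    [IsTopologicalAddGroup α] {f : β → α} {a : α} (hf : HasSum f a) (b : β) :
    HasSum (fun x : {x // x ≠ b} ↦ f x) (a - f b) := by
  classical
  have h := hasSum_ite_sub_hasSum hf b
  rw [← hasSum_subtype_iff_of_support_subset (s := {x | x ≠ b})
    (fun x hx ↦ by rintro rfl; simp at hx)] at h
  exact h.congr_fun fun x ↦ (if_neg x.2).symm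

theorem hasSum_pow_natAbs {q : ℝ} (hq : |q| < 1) :
    HasSum (fun k : ℤ ↦ q ^ k.natAbs) ((1 - q)⁻¹ + q * (1 - q)⁻¹) := by
  have hgeom := hasSum_geometric_of_abs_lt_one hq
  refine HasSum.of_nat_of_neg_add_one hgeom ((hgeom.mul_left q).congr_fun fun n ↦ ?_)
  rw [show (-((n : ℤ) + 1)).natAbs = n + 1 by omega, pow_succ']

theorem hasSum_pow_natAbs_ne_zero {q : ℝ} (hq : |q| < 1) :
    HasSum (fun k : {k : ℤ // k ≠ 0} ↦ q ^ (k : ℤ).natAbs) (2 * q / (1 - q)) := by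
  have h := (hasSum_pow_natAbs hq).subtype_ne 0
  have : 1 - q ≠ 0 := by linarith [le_abs_self q]
  rwa [Int.natAbs_zero, pow_zero,
    show (1 - q)⁻¹ + q * (1 - q)⁻¹ - 1 = 2 * q / (1 - q) by field_simp; ring] at h

theorem exp_neg_sq_le_exp_pow_natAbs {L δ : ℝ} (hδ : 0 < δ) (hLδ : L * δ ^ 2 ≤ π ^ 2)
    (k : ℤ) : exp (-(2 * π * k / δ) ^ 2 / 2) ≤ exp (-2 * L) ^ k.natAbs := by
  rw [← exp_nat_mul, exp_le_exp]
  have hL : L ≤ π ^ 2 / δ ^ 2 := by rwa [le_div_iff₀ (by positivity)]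
  have hk : (k.natAbs : ℝ) ≤ (k : ℝ) ^ 2 := by
    simpa using (Int.cast_le (R := ℝ)).mpr (Int.natAbs_le_self_sq k)
  calc (k.natAbs : ℝ) * (-2 * L) = -(2 * (L * k.natAbs)) := by ring
    _ ≥ -(2 * (π ^ 2 / δ ^ 2 * k ^ 2)) := by gcongr
    _ = -(2 * π * k / δ) ^ 2 / 2 := by ring

theorem tsum_exp_neg_sq_ne_zero_le {L δ : ℝ} (hL : 0 < L) (hδ : 0 < δ)
    (hLδ : L * δ ^ 2 ≤ π ^ 2) :
    ∑' k : {k : ℤ // k ≠ 0}, exp (-(2 * π * (k : ℤ) / δ) ^ 2 / 2) ≤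
      2 * exp (-2 * L) / (1 - exp (-2 * L)) := by
  have hq : |exp (-2 * L)| < 1 := by
    rw [abs_of_pos (exp_pos _), exp_lt_one_iff]; linarith
  have hbound (k : {k : ℤ // k ≠ 0}) := exp_neg_sq_le_exp_pow_natAbs hδ hLδ k
  have hG := hasSum_pow_natAbs_ne_zero hq
  exact hasSum_le hbound
    (Summable.of_nonneg_of_le (fun _ ↦ (exp_pos _).le) hbound hG.summable).hasSum hG

theorem stmt_7_general (ε c δz : ℝ) (hδz : 0 < δz) (hδz' : δz ≤ Real.pi / Real.sqrt (Real.log (c / ε))) :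
    (∑' k : {k : ℤ // k ≠ 0}, Real.exp (-(2 * Real.pi * ((k : ℤ) : ℝ) / δz) ^ 2 / 2)) ≤
      2 * ε ^ 2 / (c ^ 2 - ε ^ 2) := by
  set L := log (c / ε)
  have hL : 0 < L := sqrt_pos.mp <| (div_pos_iff_of_pos_left pi_pos).mp (hδz.trans_le hδz')
  have hLδ : L * δz ^ 2 ≤ π ^ 2 := by
    have := pow_le_pow_left₀ (by positivity) ((le_div_iff₀ (sqrt_pos.mpr hL)).mp hδz') 2
    rwa [mul_pow, sq_sqrt hL.le, mul_comm] at this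
  have hcε : c / ε ≠ 0 := fun h ↦ hL.ne' (by simp [L, h])
  have hq : exp (-2 * L) = (ε / c) ^ 2 := by
    calc exp (-2 * L) = (exp L)⁻¹ * (exp L)⁻¹ := by rw [← exp_neg, ← exp_add]; ring_nf
      _ = |ε / c| * |ε / c| := by rw [exp_log_eq_abs hcε, ← abs_inv, inv_div]
      _ = (ε / c) ^ 2 := by rw [abs_mul_abs_self, sq]
  calc _ ≤ 2 * exp (-2 * L) / (1 - exp (-2 * L)) := tsum_exp_neg_sq_ne_zero_le hL hδz hLδ
    _ = 2 * ε ^ 2 / (c ^ 2 - ε ^ 2) := by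
      have hc : c ^ 2 ≠ 0 := pow_ne_zero 2 (div_ne_zero_iff.mp hcε).1
      rw [hq, div_pow, one_sub_div hc, mul_div_assoc', div_div_div_cancel_right₀ hc]

/-- tail estimate from the proof of Lemma 1:
for `0 < ε ≤ 1/5`, `c ≥ 1`, and `0 < δz ≤ π/√(log(c/ε))`,
`∑_{k≠0} exp(−(2πk/δz)²/2) ≤ 2ε²/(c² − ε²)`. -/
theorem stmt_7 (ε c δz : ℝ) (hε : 0 < ε) (hε' : ε ≤ 1 / 5) (hc : 1 ≤ c)
    (hδz : 0 < δz) (hδz' : δz ≤ Real.pi / Real.sqrt (Real.log (c / ε))) :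
    (∑' k : {k : ℤ // k ≠ 0}, Real.exp (-(2 * Real.pi * ((k : ℤ) : ℝ) / δz) ^ 2 / 2)) ≤
      2 * ε ^ 2 / (c ^ 2 - ε ^ 2) :=
  stmt_7_general ε c δz hδz hδz'
end

section
/- Let P and W be bounded linear operators on a complex Hilbert space such that P is an orthogonal projection (P² = P and P† = P) and W is unitary. Define R := 2P − I and A := W R W† R W R W† R W. Then P A P = 5·(P W P) − 20·(P W P W† P W P) + 16·(P W P W† P W P W† P W P). -/
/-!
With `R = 2P - 1` one has `P R = P`, so inserting `R` between two factors and compressing by `P`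
gives `P (x R y) P = 2 (PxP)(PyP) - P (x y) P`. For the alternating words
`E_n = P (W R W† R W ⋯) P` of length `n`, the product `x y` collapses to `1` by unitarity, which
turns this into the Chebyshev recurrence `E_{n+1} = 2 (PxP) E_n - E_{n-1}` with `E_0 = P`.
Hence `E_5` is `T_5(t) = 16 t⁵ - 20 t³ + 5 t` evaluated with `t` alternately `PWP` and `PW†P`.
-/

namespace IsIdempotentElem

variable {A : Type*} [Ring A] {P : A}

theorem mul_reflection (hP : IsIdempotentElem P) : P * (2 * P - 1) = P := by
  have : P * (2 * P - 1) = 2 * (P * P) - P := by noncomm_ring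
  rw [this, hP.eq]; noncomm_ring

theorem compress_mul_reflection_mul (hP : IsIdempotentElem P) (x y : A) :
    P * (x * (2 * P - 1) * y) * P = 2 * ((P * x * P) * (P * y * P)) - P * (x * y) * P := by
  have : P * x * P * (P * y * P) = P * x * P * y * P := by
    simp only [mul_assoc, ← mul_assoc P P, hP.eq]
  rw [this]; noncomm_ring

theorem compress_reflection_word_step (hP : IsIdempotentElem P) {x y : A}
    (hxy : x * y = 1) (z : A) :
    P * (x * (2 * P - 1) * (y * (2 * P - 1) * z)) * P =
      2 * ((P * x * P) * (P * (y * (2 * P - 1) * z) * P)) - P * z * P := by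
  rw [hP.compress_mul_reflection_mul, ← mul_assoc x, ← mul_assoc x, hxy, one_mul,
    ← mul_assoc P (2 * P - 1), hP.mul_reflection]

theorem compress_reflection_word (hP : IsIdempotentElem P) {W V : A}
    (hWV : W * V = 1) (hVW : V * W = 1) :
    let R := 2 * P - 1
    P * (W * R * V * R * W * R * V * R * W) * P =
      5 * (P * W * P) - 20 * (P * W * P * V * P * W * P) +
        16 * (P * W * P * V * P * W * P * V * P * W * P) := by
  intro R
  rw [show W * R * V * R * W * R * V * R * W = W * R * (V * R * (W * R * (V * R * W))) by
    simp only [mul_assoc]]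
  have hMNM : P * W * P * V * P * W * P = (P * W * P) * (P * V * P) * (P * W * P) := by
    simp only [mul_assoc, ← mul_assoc P P, hP.eq]
  have hMNMNM : P * W * P * V * P * W * P * V * P * W * P =
      (P * W * P) * (P * V * P) * (P * W * P) * (P * V * P) * (P * W * P) := by
    simp only [mul_assoc, ← mul_assoc P P, hP.eq]
  rw [hMNMNM, hMNM]
  set M := P * W * P with hM
  set N := P * V * P with hN
  have hMP : M * P = M := by rw [hM, mul_assoc, hP.eq]
  clear_value M N
  have e2 : P * (V * R * W) * P = 2 * (N * M) - P := by
    rw [hP.compress_mul_reflection_mul, hVW, mul_one, hP.eq, ← hM, ← hN]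
  have e3 : P * (W * R * (V * R * W)) * P = 4 * (M * N * M) - 3 * M := by
    rw [hP.compress_reflection_word_step hWV, e2, ← hM, mul_sub, hMP]; noncomm_ring
  have e4 : P * (V * R * (W * R * (V * R * W))) * P = 8 * (N * M * N * M) - 8 * (N * M) + P := by
    rw [hP.compress_reflection_word_step hVW, e3, e2, ← hN, mul_sub]; noncomm_ring
  have e5 : P * (W * R * (V * R * (W * R * (V * R * W)))) * P =
      16 * (M * N * M * N * M) - 20 * (M * N * M) + 5 * M := by
    rw [hP.compress_reflection_word_step hWV, e4, e3, ← hM, mul_add, hMP]; noncomm_ring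
  rw [e5]
  noncomm_ring

end IsIdempotentElem

open ContinuousLinearMap in
theorem stmt_8_general {K : Type*} [NormedAddCommGroup K] [InnerProductSpace ℂ K] [CompleteSpace K]
    (P W : K →L[ℂ] K)
    (hP2 : P * P = P)
    (hW1 : adjoint W * W = 1) (hW2 : W * adjoint W = 1) :
    P * (W * ((2 : ℂ) • P - 1) * adjoint W * ((2 : ℂ) • P - 1) * W * ((2 : ℂ) • P - 1) *
        adjoint W * ((2 : ℂ) • P - 1) * W) * P =
      (5 : ℂ) • (P * W * P) -
        (20 : ℂ) • (P * W * P * adjoint W * P * W * P) +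
        (16 : ℂ) • (P * W * P * adjoint W * P * W * P * adjoint W * P * W * P) := by
  simp only [Algebra.smul_def, map_ofNat]
  exact IsIdempotentElem.compress_reflection_word hP2 hW2 hW1

open ContinuousLinearMap in
/-- Eq. (36): for an orthogonal projection `P` and a unitary `W` on a complex
Hilbert space, with `R := 2P − I` and `A := W R W† R W R W† R W`,
`P A P = 5 (PWP) − 20 (PWPW†PWP) + 16 (PWPW†PWPW†PWP)`. -/
theorem stmt_8 {K : Type*} [NormedAddCommGroup K] [InnerProductSpace ℂ K] [CompleteSpace K]
    (P W : K →L[ℂ] K)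
    (hP2 : P * P = P) (hPsa : adjoint P = P)
    (hW1 : adjoint W * W = 1) (hW2 : W * adjoint W = 1) :
    P * (W * ((2 : ℂ) • P - 1) * adjoint W * ((2 : ℂ) • P - 1) * W * ((2 : ℂ) • P - 1) *
        adjoint W * ((2 : ℂ) • P - 1) * W) * P =
      (5 : ℂ) • (P * W * P) -
        (20 : ℂ) • (P * W * P * adjoint W * P * W * P) +
        (16 : ℂ) • (P * W * P * adjoint W * P * W * P * adjoint W * P * W * P) :=
  stmt_8_general P W hP2 hW1 hW2
end

section
/- Let H be a finite-dimensional complex inner product space, let N ≥ 1, and let U_1, …, U_N be unitary operators on H. Let β_1, …, β_N be complex numbers, not all zero, and set s := ∑_{j=1}^N |β_j|. Let γ_1, …, γ_N be complex numbers with |γ_j|² = |β_j| for all j, and let B be a unitary N×N complex matrix whose first column equals (γ_1, …, γ_N)/√s. Define the operator select := ∑_{j=1}^N E_{jj} ⊗ U_j on ℂ^N ⊗ H, where E_{jj} is the matrix unit, and define W := (B† ⊗ I)·select·(B ⊗ I). Then, with P := E_{11} ⊗ I, one has P W P = E_{11} ⊗ ((1/s) ∑_{j=1}^N |β_j| U_j).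 -/
/-!
Compressing `select` by `E₁₁ B†` on the left and `B E₁₁` on the right acts term by term: the
`j`-th term becomes `(E₁₁ B† E_jj B E₁₁) ⊗ U_j = (conj (B j 0) * B j 0) • E₁₁ ⊗ U_j`, and the first
column of `B` gives `conj (B j 0) * B j 0 = |γ_j|² / s = |β_j| / s`.
-/

open scoped TensorProduct

namespace TensorProduct

variable {R ι M N P Q S T : Type*} [CommSemiring R] [AddCommMonoid M] [AddCommMonoid N]
  [AddCommMonoid P] [AddCommMonoid Q] [AddCommMonoid S] [AddCommMonoid T]
  [Module R M] [Module R N] [Module R P] [Module R Q] [Module R S] [Module R T]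

theorem map_comp_sum_comp_map (f : P →ₗ[R] S) (g : ι → N →ₗ[R] P) (h : M →ₗ[R] N)
    (V : ι → Q →ₗ[R] T) (s : Finset ι) :
    (map f .id ∘ₗ ∑ j ∈ s, map (g j) (V j)) ∘ₗ map h .id =
      ∑ j ∈ s, map (f ∘ₗ g j ∘ₗ h) (V j) := by
  ext x
  simp [LinearMap.sum_apply, map_sum]

theorem map_sum_right (f : M →ₗ[R] P) (g : ι → N →ₗ[R] Q) (s : Finset ι) :
    map f (∑ j ∈ s, g j) = ∑ j ∈ s, map f (g j) :=
  map_sum (mapBilinear (.id R) M N P Q f) g s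

end TensorProduct

theorem Complex.star_div_sqrt_mul_div_sqrt {γ : ℂ} {b s : ℝ} (hs : 0 ≤ s) (h : ‖γ‖ ^ 2 = b) :
    star (γ / (Real.sqrt s : ℂ)) * (γ / (Real.sqrt s : ℂ)) = (b / s : ℝ) := by
  rw [star_div₀, div_mul_div_comm, Complex.star_def, Complex.conj_mul', Complex.conj_ofReal,
    ← Complex.ofReal_mul, Real.mul_self_sqrt hs, ← h]
  push_cast
  rfl

theorem stmt_11_general {H : Type*} [NormedAddCommGroup H] [InnerProductSpace ℂ H]
    (N : ℕ) (hN : 0 < N)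
    (U : Fin N → (H ≃ₗᵢ[ℂ] H)) (β : Fin N → ℂ)
    (γ : Fin N → ℂ) (hγ : ∀ j, ‖γ j‖ ^ 2 = ‖β j‖)
    (B : Matrix (Fin N) (Fin N) ℂ)
    (hcol : ∀ j, B j ⟨0, hN⟩ =
      γ j / (Real.sqrt (∑ i, ‖β i‖) : ℂ))
    (select W P : (Fin N → ℂ) ⊗[ℂ] H →ₗ[ℂ] (Fin N → ℂ) ⊗[ℂ] H)
    (hselect : select = ∑ j, TensorProduct.map
      (Matrix.toLin' (Matrix.single j j 1)) (U j).toLinearEquiv.toLinearMap)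
    (hW : W = (TensorProduct.map (Matrix.toLin' (star B)) LinearMap.id) ∘ₗ select ∘ₗ
      (TensorProduct.map (Matrix.toLin' B) LinearMap.id))
    (hP : P = TensorProduct.map
      (Matrix.toLin' (Matrix.single ⟨0, hN⟩ ⟨0, hN⟩ 1)) LinearMap.id) :
    P ∘ₗ W ∘ₗ P = TensorProduct.map
      (Matrix.toLin' (Matrix.single ⟨0, hN⟩ ⟨0, hN⟩ 1))
      (((∑ i, ‖β i‖ : ℝ) : ℂ)⁻¹ •
        ∑ j, ((‖β j‖ : ℝ) : ℂ) • (U j).toLinearEquiv.toLinearMap) := by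
  subst hselect hW hP
  set z : Fin N := ⟨0, hN⟩
  set s : ℝ := ∑ i, ‖β i‖
  have hweight (j : Fin N) : star (B j z) * B j z = ((‖β j‖ / s : ℝ) : ℂ) := by
    rw [hcol j]
    exact Complex.star_div_sqrt_mul_div_sqrt (by positivity) (hγ j)
  simp only [← LinearMap.comp_assoc, ← TensorProduct.map_comp, LinearMap.id_comp]
  rw [LinearMap.comp_assoc, ← TensorProduct.map_comp, LinearMap.id_comp,
    TensorProduct.map_comp_sum_comp_map, TensorProduct.map_smul_right,
    TensorProduct.map_sum_right, Finset.smul_sum]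
  refine Finset.sum_congr rfl fun j _ => ?_
  rw [TensorProduct.map_smul_right, smul_smul, ← TensorProduct.map_smul_left, ← map_smul,
    Matrix.smul_single, smul_eq_mul, mul_one]
  simp only [← Matrix.toLin'_mul, ← Matrix.mul_assoc, Matrix.single_mul_mul_single, one_mul,
    mul_one, Matrix.star_apply, hweight, div_eq_inv_mul, Complex.ofReal_mul, Complex.ofReal_inv]

/-- LCU compression identity: conjugating `select := ∑_j E_{jj} ⊗ U_j` on
`ℂ^N ⊗ H` by the state-preparation unitary `B ⊗ I` (whose first column encodes `√(β_j/s)`)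
and projecting the ancilla onto its first basis state realizes `(1/s) ∑_j |β_j| U_j`. -/
theorem stmt_11 {H : Type*} [NormedAddCommGroup H] [InnerProductSpace ℂ H]
    [FiniteDimensional ℂ H] (N : ℕ) (hN : 0 < N)
    (U : Fin N → (H ≃ₗᵢ[ℂ] H)) (β : Fin N → ℂ) (hβ : β ≠ 0)
    (γ : Fin N → ℂ) (hγ : ∀ j, ‖γ j‖ ^ 2 = ‖β j‖)
    (B : Matrix (Fin N) (Fin N) ℂ) (hB : B ∈ Matrix.unitaryGroup (Fin N) ℂ)
    (hcol : ∀ j, B j ⟨0, hN⟩ =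
      γ j / (Real.sqrt (∑ i, ‖β i‖) : ℂ))
    (select W P : (Fin N → ℂ) ⊗[ℂ] H →ₗ[ℂ] (Fin N → ℂ) ⊗[ℂ] H)
    (hselect : select = ∑ j, TensorProduct.map
      (Matrix.toLin' (Matrix.single j j 1)) (U j).toLinearEquiv.toLinearMap)
    (hW : W = (TensorProduct.map (Matrix.toLin' (star B)) LinearMap.id) ∘ₗ select ∘ₗ
      (TensorProduct.map (Matrix.toLin' B) LinearMap.id))
    (hP : P = TensorProduct.map
      (Matrix.toLin' (Matrix.single ⟨0, hN⟩ ⟨0, hN⟩ 1)) LinearMap.id) :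
    P ∘ₗ W ∘ₗ P = TensorProduct.map
      (Matrix.toLin' (Matrix.single ⟨0, hN⟩ ⟨0, hN⟩ 1))
      (((∑ i, ‖β i‖ : ℝ) : ℂ)⁻¹ •
        ∑ j, ((‖β j‖ : ℝ) : ℂ) • (U j).toLinearEquiv.toLinearMap) :=
  stmt_11_general N hN U β γ hγ B hcol select W P hselect hW hP
end

section
/- There exists a universal constant C > 0 with the following property. Let H be a finite-dimensional complex inner product space, let M ≥ 1, and let e₀ be a fixed unit vector of ℂ^M. Let P := (e₀e₀†) ⊗ I be the orthogonal projection on ℂ^M ⊗ H determined by e₀, set R := 2P − I, and let W be a unitary operator on ℂ^M ⊗ H. Suppose there exist a linear operator R̃ on H and a real number s > 0 with P W P = (1/s)·(e₀e₀†) ⊗ R̃. Let R₀ be a unitary operator on H and let 0 < ε ≤ 1/10 satisfy ‖R̃ − R₀‖ ≤ ε and |s − 1/sin(π/10)| ≤ ε. Then, defining A := W R W† R W R W† R W, the operator norm of P A P − (e₀e₀†) ⊗ R₀ is at most C·ε. -/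
/-!
With `Q := J† W J = R̃ / s`, expanding `R = 2P - 1` shows `P A P = J T(Q) J†` for the
noncommutative quintic `T(Q) = 16 QQ†QQ†Q - 20 QQ†Q + 5Q`, the Chebyshev-type polynomial with
`sin 5θ = T(sin θ)`. Hence `T(sin(π/10) R₀) = sin(π/2) R₀ = R₀` for unitary `R₀`, and since `T` is
Lipschitz on bounded sets and `Q` is within `O(ε)` of `sin(π/10) R₀`, the error is `O(ε)`.
-/

open ContinuousLinearMap Real

section Ring

variable {A : Type*} [Ring A]

def oaaPoly (q q' : A) : A := 16 • (q * q' * q * q' * q) - 20 • (q * q' * q) + 5 • q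

theorem map_oaaPoly {B F : Type*} [Ring B] [FunLike F A B] [NonUnitalRingHomClass F A B] (φ : F)
    (q q' : A) : φ (oaaPoly q q') = oaaPoly (φ q) (φ q') := by
  simp only [oaaPoly, map_add, map_sub, map_nsmul, map_mul]

theorem oaaPoly_smul {R : Type*} [CommRing R] [Algebra R A] (c : R) {u u' : A}
    (hu : u * u' * u = u) :
    oaaPoly (c • u) (c • u') = (16 * c ^ 5 - 20 * c ^ 3 + 5 * c) • u := by
  simp only [oaaPoly, smul_mul_smul, hu]
  module

theorem IsIdempotentElem.mul_twoRoundOAA_mul {P W W' : A} (hP : IsIdempotentElem P)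
    (hW : W * W' = 1) (hW' : W' * W = 1) :
    P * (W * (2 * P - 1) * W' * (2 * P - 1) * W * (2 * P - 1) * W' * (2 * P - 1) * W) * P
      = oaaPoly (P * W * P) (P * W' * P) := by
  -- Expand each `2 * P - 1`; on left-associated words the rules `P * P = P`, `W * W' = 1`,
  -- `W' * W = 1` are confluent, so both sides reach the same normal form.
  have hPP (x : A) : x * P * P = x * P := by rw [mul_assoc, hP.eq]
  have hWW' (x : A) : x * W * W' = x := by rw [mul_assoc, hW, mul_one]
  have hW'W (x : A) : x * W' * W = x := by rw [mul_assoc, hW', mul_one]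
  simp only [oaaPoly, two_mul, mul_sub, sub_mul, mul_add, add_mul, mul_one, one_mul, ← mul_assoc,
    hP.eq, hW, hPP, hWW', hW'W]
  abel

end Ring

section Normed

variable {A : Type*} [NormedRing A]

theorem norm_mul_sub_mul_le_of_le {a b c d : A} {α δ M : ℝ} (hac : ‖a - c‖ ≤ α)
    (hbd : ‖b - d‖ ≤ δ) (hb : ‖b‖ ≤ M) (hc : ‖c‖ ≤ 1) : ‖a * b - c * d‖ ≤ α * M + δ := by
  calc ‖a * b - c * d‖ = ‖(a - c) * b + c * (b - d)‖ := by noncomm_ring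
    _ ≤ ‖(a - c) * b‖ + ‖c * (b - d)‖ := norm_add_le _ _
    _ ≤ α * M + 1 * δ := add_le_add (norm_mul_le_of_le hac hb) (norm_mul_le_of_le hc hbd)
    _ = α * M + δ := by rw [one_mul]

theorem norm_oaaPoly_sub_oaaPoly_le {q q' u u' : A} {δ M : ℝ} (hq : ‖q‖ ≤ M) (hq' : ‖q'‖ ≤ M)
    (hu : ‖u‖ ≤ 1) (hu' : ‖u'‖ ≤ 1) (hqu : ‖q - u‖ ≤ δ) (hqu' : ‖q' - u'‖ ≤ δ) :
    ‖oaaPoly q q' - oaaPoly u u'‖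
      ≤ (16 * (M ^ 4 + M ^ 3 + M ^ 2 + M + 1) + 20 * (M ^ 2 + M + 1) + 5) * δ := by
  have hu₂ : ‖u * u'‖ ≤ 1 := (norm_mul_le_of_le hu hu').trans_eq (one_mul 1)
  have hu₃ : ‖u * u' * u‖ ≤ 1 := (norm_mul_le_of_le hu₂ hu).trans_eq (one_mul 1)
  have hu₄ : ‖u * u' * u * u'‖ ≤ 1 := (norm_mul_le_of_le hu₃ hu').trans_eq (one_mul 1)
  have h₂ := norm_mul_sub_mul_le_of_le hqu hqu' hq' hu
  have h₃ := norm_mul_sub_mul_le_of_le h₂ hqu hq hu₂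
  have h₄ := norm_mul_sub_mul_le_of_le h₃ hqu' hq' hu₃
  have h₅ := norm_mul_sub_mul_le_of_le h₄ hqu hq hu₄
  have hsplit : oaaPoly q q' - oaaPoly u u' = 16 • (q * q' * q * q' * q - u * u' * u * u' * u)
      - 20 • (q * q' * q - u * u' * u) + 5 • (q - u) := by
    simp only [oaaPoly, smul_sub]; abel
  calc ‖oaaPoly q q' - oaaPoly u u'‖
      ≤ 16 * ‖q * q' * q * q' * q - u * u' * u * u' * u‖ + 20 * ‖q * q' * q - u * u' * u‖
        + 5 * ‖q - u‖ := by
        rw [hsplit]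
        refine (norm_add_le_of_le (norm_sub_le_of_le ?_ ?_) ?_) <;> exact norm_nsmul_le ..
    _ ≤ _ := by linarith

end Normed

theorem Real.sin_five_mul (x : ℝ) :
    sin (5 * x) = 16 * sin x ^ 5 - 20 * sin x ^ 3 + 5 * sin x := by
  rw [show 5 * x = 3 * x + 2 * x by ring, sin_add, sin_three_mul, cos_three_mul, sin_two_mul,
    cos_two_mul]
  linear_combination (8 * sin x * (cos x ^ 2 + 1 - 2 * sin x ^ 2)) * sin_sq_add_cos_sq x

theorem Real.sin_pi_div_ten_quintic :
    16 * sin (π / 10) ^ 5 - 20 * sin (π / 10) ^ 3 + 5 * sin (π / 10) = 1 := by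
  rw [← sin_five_mul, show 5 * (π / 10) = π / 2 by ring, sin_pi_div_two]

theorem abs_inv_sub_le_of_abs_sub_inv_le {s σ ε : ℝ} (hσ : 0 < σ) (hσ₁ : σ ≤ 1)
    (hε : ε ≤ 1 / 10) (hs : |s - σ⁻¹| ≤ ε) : |s⁻¹| ≤ 2 ∧ |s⁻¹ - σ| ≤ 2 * ε := by
  have hσ_inv : 1 ≤ σ⁻¹ := one_le_inv₀ hσ |>.mpr hσ₁
  have hs₀ : 9 / 10 ≤ s := by linarith [(abs_le.mp hs).1]
  have hs_inv : s⁻¹ ≤ 2 := by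
    rw [inv_le_comm₀ (by linarith) (by norm_num)]; linarith
  refine ⟨by rwa [abs_of_pos (by positivity)], ?_⟩
  calc |s⁻¹ - σ| = σ * s⁻¹ * |σ⁻¹ - s| := by
        rw [← abs_of_pos (by positivity : 0 < σ * s⁻¹), ← abs_mul]
        congr 1; field_simp
    _ ≤ 1 * 2 * ε := by rw [abs_sub_comm] at hs; gcongr
    _ = 2 * ε := by ring

theorem norm_smul_sub_smul_le {𝕜 E : Type*} [NormedField 𝕜] [SeminormedAddCommGroup E]
    [NormedSpace 𝕜 E] (a b : 𝕜) (x y : E) : ‖a • x - b • y‖ ≤ ‖a‖ * ‖x - y‖ + ‖a - b‖ * ‖y‖ := by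
  calc ‖a • x - b • y‖ = ‖a • (x - y) + (a - b) • y‖ := by rw [smul_sub, sub_smul]; abel_nf
    _ ≤ _ := (norm_add_le _ _).trans_eq (by rw [norm_smul, norm_smul])

section CStar

variable {A : Type*} [NormedRing A] [StarRing A] [CStarRing A]

theorem CStarRing.norm_le_one_of_star_mul_self_eq_one {u : A} (hu : star u * u = 1) :
    ‖u‖ ≤ 1 := by
  nontriviality A
  have : ‖u‖ * ‖u‖ = 1 := by rw [← CStarRing.norm_star_mul_self, hu, CStarRing.norm_one]
  nlinarith [norm_nonneg u]

variable [NormedAlgebra ℂ A] [StarModule ℂ A]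

theorem norm_oaaPoly_inv_smul_sub_le {Rt R₀ : A} {s ε : ℝ} (hR₀ : star R₀ * R₀ = 1)
    (hε : ε ≤ 1 / 10) (hRt : ‖Rt - R₀‖ ≤ ε) (hs : |s - 1 / sin (π / 10)| ≤ ε) :
    ‖oaaPoly ((s : ℂ)⁻¹ • Rt) (star ((s : ℂ)⁻¹ • Rt)) - R₀‖ ≤ 2564 * ε := by
  have hε₀ : 0 ≤ ε := (norm_nonneg _).trans hRt
  set σ := sin (π / 10)
  have hσ : 0 < σ := sin_pos_of_pos_of_lt_pi (by positivity) (by linarith [pi_pos])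
  obtain ⟨hs_inv, hsσ⟩ :=
    abs_inv_sub_le_of_abs_sub_inv_le hσ (sin_le_one _) hε (by rwa [← one_div])
  set q := (s : ℂ)⁻¹ • Rt
  set u := (σ : ℂ) • R₀
  have hR₀_le := CStarRing.norm_le_one_of_star_mul_self_eq_one hR₀
  have hu : ‖u‖ ≤ 1 := by
    rw [norm_smul, Complex.norm_real, Real.norm_of_nonneg hσ.le]
    nlinarith [sin_le_one (π / 10), norm_nonneg R₀]
  have hqu : ‖q - u‖ ≤ 4 * ε :=
    calc ‖q - u‖ ≤ ‖(s : ℂ)⁻¹‖ * ‖Rt - R₀‖ + ‖(s : ℂ)⁻¹ - σ‖ * ‖R₀‖ := norm_smul_sub_smul_le ..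
      _ = |s⁻¹| * ‖Rt - R₀‖ + |s⁻¹ - σ| * ‖R₀‖ := by
        rw [← Complex.ofReal_inv, ← Complex.ofReal_sub, Complex.norm_real, Complex.norm_real,
          Real.norm_eq_abs, Real.norm_eq_abs]
      _ ≤ 2 * ε + 2 * ε * 1 := by gcongr
      _ = 4 * ε := by ring
  have hq : ‖q‖ ≤ 2 := by linarith [norm_le_norm_add_norm_sub' q u]
  have hu_poly : oaaPoly u (star u) = R₀ := by
    have hquintic : (16 * (σ : ℂ) ^ 5 - 20 * (σ : ℂ) ^ 3 + 5 * σ) = 1 := by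
      exact_mod_cast sin_pi_div_ten_quintic
    rw [star_smul, Complex.star_def, Complex.conj_ofReal,
      oaaPoly_smul _ (by rw [mul_assoc, hR₀, mul_one]), hquintic, one_smul]
  rw [← hu_poly]
  calc _ ≤ (16 * (2 ^ 4 + 2 ^ 3 + 2 ^ 2 + 2 + 1) + 20 * (2 ^ 2 + 2 + 1) + 5) * (4 * ε) :=
        norm_oaaPoly_sub_oaaPoly_le hq (by rwa [norm_star]) hu (by rwa [norm_star]) hqu
          (by rwa [← star_sub, norm_star])
    _ = 2564 * ε := by ring

end CStar

namespace ContinuousLinearMap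

variable {H K : Type*} [NormedAddCommGroup H] [InnerProductSpace ℂ H] [CompleteSpace H]
  [NormedAddCommGroup K] [InnerProductSpace ℂ K] [CompleteSpace K]

theorem norm_le_one_of_adjoint_comp_self_eq_id {J : H →L[ℂ] K}
    (hJ : adjoint J ∘L J = ContinuousLinearMap.id ℂ H) : ‖J‖ ≤ 1 := by
  have h : ‖J‖ * ‖J‖ ≤ 1 := by rw [← norm_adjoint_comp_self, hJ]; exact norm_id_le
  nlinarith [norm_nonneg J]

noncomputable def conjIsometry (J : H →L[ℂ] K)
    (hJ : adjoint J ∘L J = ContinuousLinearMap.id ℂ H) : (H →L[ℂ] H) →⋆ₙₐ[ℂ] (K →L[ℂ] K) where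
  toFun X := J ∘L X ∘L adjoint J
  map_smul' c X := by simp only [smul_comp, comp_smul, MonoidHom.id_apply]
  map_zero' := by simp only [zero_comp, comp_zero]
  map_add' X Y := by simp only [add_comp, comp_add]
  map_mul' X Y := by
    simp only [mul_def, comp_assoc]
    rw [← comp_assoc (adjoint J) J, hJ, id_comp]
  map_star' X := by simp only [star_eq_adjoint, adjoint_comp, adjoint_adjoint, comp_assoc]

theorem conjIsometry_apply (J : H →L[ℂ] K) (hJ : adjoint J ∘L J = ContinuousLinearMap.id ℂ H)
    (X : H →L[ℂ] H) : conjIsometry J hJ X = J ∘L X ∘L adjoint J := rfl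

theorem norm_conjIsometry_le (J : H →L[ℂ] K) (hJ : adjoint J ∘L J = ContinuousLinearMap.id ℂ H)
    (X : H →L[ℂ] H) : ‖conjIsometry J hJ X‖ ≤ ‖X‖ := by
  have hJ₁ := norm_le_one_of_adjoint_comp_self_eq_id hJ
  have hJ₁' : ‖adjoint J‖ ≤ 1 := by rwa [LinearIsometryEquiv.norm_map]
  calc ‖J ∘L X ∘L adjoint J‖ ≤ ‖J‖ * (‖X‖ * ‖adjoint J‖) :=
        (opNorm_comp_le _ _).trans (by gcongr; exact opNorm_comp_le _ _)
    _ ≤ 1 * (‖X‖ * 1) := by gcongr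
    _ = ‖X‖ := by ring

end ContinuousLinearMap

open ContinuousLinearMap in
/-- correctness of two rounds of oblivious amplitude amplification,
Section IV.A.  The space `ℂ^M ⊗ H` together with the rank-one ancilla projector
`e₀e₀† ⊗ I` is encoded by a complex Hilbert space `K` together with an isometry
`J : H → K` (namely `x ↦ e₀ ⊗ x`, so that `J†J = I_H` and `P := JJ† = e₀e₀† ⊗ I`);
in this encoding `e₀e₀† ⊗ X = J X J†` for any operator `X` on `H`.
If `P W P = (1/s)·J R̃ J†` with `‖R̃ − R₀‖ ≤ ε`, `R₀` unitary,
`|s − 1/sin(π/10)| ≤ ε` and `0 < ε ≤ 1/10`, then with `R := 2P − I` and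
`A := W R W† R W R W† R W` one has `‖P A P − J R₀ J†‖ ≤ C·ε` for a universal constant `C`. -/
theorem stmt_12 :
    ∃ C : ℝ, 0 < C ∧
      ∀ (H : Type) [NormedAddCommGroup H] [InnerProductSpace ℂ H] [FiniteDimensional ℂ H]
        (K : Type) [NormedAddCommGroup K] [InnerProductSpace ℂ K] [CompleteSpace K]
        (J : H →L[ℂ] K) (W : K →L[ℂ] K) (Rt R₀ : H →L[ℂ] H) (s ε : ℝ)
        (P R A : K →L[ℂ] K),
        adjoint J ∘L J = ContinuousLinearMap.id ℂ H →
        P = J ∘L adjoint J →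
        adjoint W * W = 1 → W * adjoint W = 1 →
        0 < s →
        P * W * P = ((s : ℂ))⁻¹ • (J ∘L Rt ∘L adjoint J) →
        adjoint R₀ * R₀ = 1 → R₀ * adjoint R₀ = 1 →
        0 < ε → ε ≤ 1 / 10 →
        ‖Rt - R₀‖ ≤ ε →
        |s - 1 / Real.sin (Real.pi / 10)| ≤ ε →
        R = (2 : ℂ) • P - 1 →
        A = W * R * adjoint W * R * W * R * adjoint W * R * W →
        ‖P * A * P - J ∘L R₀ ∘L adjoint J‖ ≤ C * ε := by
  refine ⟨2564, by norm_num, ?_⟩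
  intro H _ _ _ K _ _ _ J W Rt R₀ s ε P R A hJ hP hW₁ hW₂ _ hPWP hR₀ _ _ hε hRt hs hR hA
  set φ := conjIsometry J hJ
  have hP_idem : IsIdempotentElem P := by
    rw [hP, IsIdempotentElem, mul_def, comp_assoc, ← comp_assoc (adjoint J), hJ, id_comp]
  have hP_sa : adjoint P = P := by rw [hP, adjoint_comp, adjoint_adjoint]
  have hq : P * W * P = φ ((s : ℂ)⁻¹ • Rt) := by rw [hPWP, map_smul]; rfl
  have hq' : P * adjoint W * P = φ (star ((s : ℂ)⁻¹ • Rt)) := by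
    rw [map_star, ← hq]
    simp only [star_mul, star_eq_adjoint, hP_sa, mul_assoc]
  have hPAP : P * A * P = φ (oaaPoly ((s : ℂ)⁻¹ • Rt) (star ((s : ℂ)⁻¹ • Rt))) := by
    rw [map_oaaPoly, ← hq, ← hq', ← hP_idem.mul_twoRoundOAA_mul hW₂ hW₁, hA, hR, two_smul, two_mul]
  rw [hPAP, ← conjIsometry_apply J hJ R₀, ← map_sub]
  exact (norm_conjIsometry_le J hJ _).trans
    (norm_oaaPoly_inv_smul_sub_le (by rwa [star_eq_adjoint]) hε hRt hs)
end

section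
/- Let K be a complex inner product space, let W be a unitary operator on K, and let R be a linear operator on K. Let u, w ∈ K be orthonormal vectors with R u = u and R w = −w, and suppose W u = α u + β w for complex numbers α, β. Then ‖(W† R W + I) u‖ = 2|α|. -/
/-! Since `W` is an isometry, `‖(W† R W + I) u‖ = ‖(R + I) (W u)‖`, and `R + I` kills the
`w`-component of `W u = α u + β w` while doubling its `u`-component. -/

open scoped ComplexInnerProductSpace

theorem LinearMap.apply_add_self_of_fixed_of_neg {𝕜 M : Type*} [CommRing 𝕜] [AddCommGroup M]
    [Module 𝕜 M] (T : M →ₗ[𝕜] M) {u w : M} (hu : T u = u) (hw : T w = -w) (a b : 𝕜) :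
    T (a • u + b • w) + (a • u + b • w) = (2 * a) • u := by
  rw [map_add, map_smul, map_smul, hu, hw]
  module

theorem LinearIsometryEquiv.norm_symm_apply_add_self {𝕜 E : Type*} [Semiring 𝕜]
    [SeminormedAddCommGroup E] [Module 𝕜 E] (W : E ≃ₗᵢ[𝕜] E) (f : E → E) (x : E) :
    ‖W.symm (f (W x)) + x‖ = ‖f (W x) + W x‖ := by
  rw [← W.norm_map, map_add, W.apply_symm_apply]

theorem stmt_16_general {K : Type*} [NormedAddCommGroup K] [InnerProductSpace ℂ K]
    (W : K ≃ₗᵢ[ℂ] K) (R : K →ₗ[ℂ] K) (u w : K) (α β : ℂ)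
    (hu : ‖u‖ = 1)
    (hRu : R u = u) (hRw : R w = -w)
    (hWu : W u = α • u + β • w) :
    ‖W.symm (R (W u)) + u‖ = 2 * ‖α‖ := by
  rw [W.norm_symm_apply_add_self, hWu, R.apply_add_self_of_fixed_of_neg hRu hRw, norm_smul, hu,
    norm_mul, mul_one, Complex.norm_two]

/-- quality of the PEA-based approximate reflection, Section III:
if `u, w` are orthonormal, `R u = u`, `R w = −w`, and the unitary `W` satisfies
`W u = α u + β w`, then `‖(W† R W + I) u‖ = 2|α|`. -/
theorem stmt_16 {K : Type*} [NormedAddCommGroup K] [InnerProductSpace ℂ K]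
    (W : K ≃ₗᵢ[ℂ] K) (R : K →ₗ[ℂ] K) (u w : K) (α β : ℂ)
    (hu : ‖u‖ = 1) (hw : ‖w‖ = 1) (huw : ⟪u, w⟫ = 0)
    (hRu : R u = u) (hRw : R w = -w)
    (hWu : W u = α • u + β • w) :
    ‖W.symm (R (W u)) + u‖ = 2 * ‖α‖ :=
  stmt_16_general W R u w α β hu hRu hRw hWu
end

section
/- Let L ≥ 1 be an integer and δz > 0 a real number. For each integer l define the periodized Gaussians c_l := ∑_{k∈ℤ} exp(−π²(l + 2kL)²/(L²·δz²)) and d_l := ∑_{k∈ℤ} exp(−((l + 2kL)·δz)²/4) (both series converge absolutely, and c_l, d_l depend only on l modulo 2L). Then for every integer j, d_j = (√π/(L·δz)) · ∑_{l=−L}^{L−1} e^{iπjl/L} · c_l. -/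
/-!
Poisson summation applied to the Gaussian `m ↦ exp (-π² m² / (L δz)²)` modulated by the
frequency `j / (2L)`: the dual side is the periodized Gaussian `d_j`, while grouping `m ∈ ℤ` by
its residue modulo `2L` and using the `2L`-periodicity of the phase `e^{iπjm/L}` turns the
primal side into `∑_l e^{iπjl/L} c_l`.
-/

open Complex Real

lemma summable_exp_neg_mul_add_mul_sq {c : ℝ} (hc : 0 < c) (t : ℝ) {s : ℝ} (hs : s ≠ 0) :
    Summable fun k : ℤ => rexp (-(c * (t + k * s) ^ 2)) := by
  set τ : ℂ := (c * s ^ 2 / π : ℝ) * I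
  set z : ℂ := (c * t * s / π : ℝ) * I
  have hτ : τ.im = c * s ^ 2 / π := by rw [mul_I_im, ofReal_re]
  have hz : z.im = c * t * s / π := by rw [mul_I_im, ofReal_re]
  have hθ : Summable fun n : ℤ => ‖jacobiTheta₂_term n z τ‖ :=
    ((summable_jacobiTheta₂_term_iff z τ).mpr (by rw [hτ]; positivity)).norm
  -- `‖jacobiTheta₂_term n z τ‖ = exp (-π n² Im τ - 2π n Im z)` is our term times `exp (c t²)`.
  refine (summable_mul_left_iff (Real.exp_ne_zero (c * t ^ 2))).mp (hθ.congr fun n => ?_)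
  rw [norm_jacobiTheta₂_term, ← Real.exp_add, hτ, hz]
  congr 1
  field_simp
  ring

def Int.residueEquiv (r N : ℤ) (hN : 0 < N) : Finset.Ico r (r + N) × ℤ ≃ ℤ where
  toFun p := p.1 + p.2 * N
  invFun m := (⟨r + (m - r) % N, by
      have := Int.emod_nonneg (m - r) hN.ne'
      have := Int.emod_lt_of_pos (m - r) hN
      simp only [Finset.mem_Ico]
      omega⟩, (m - r) / N)
  left_inv := by
    rintro ⟨⟨l, hl⟩, k⟩
    rw [Finset.mem_Ico] at hl
    have hm : l + k * N - r = (l - r) + N * k := by ring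
    have hq : (l - r) / N = 0 := Int.ediv_eq_zero_of_lt (by omega) (by omega)
    have hr : (l - r) % N = l - r := Int.emod_eq_of_lt (by omega) (by omega)
    ext
    · simp [hm, hr]
    · simp [hm, Int.add_mul_ediv_left _ _ hN.ne', hq]
  right_inv m := by
    have := Int.ediv_mul_add_emod (m - r) N
    simp only
    omega

lemma Int.tsum_eq_sum_Ico_tsum {M : Type*} [AddCommGroup M] [UniformSpace M]
    [IsUniformAddGroup M] [CompleteSpace M] [T0Space M] {f : ℤ → M} (hf : Summable f)
    (r : ℤ) {N : ℤ} (hN : 0 < N) :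
    ∑' m, f m = ∑ l ∈ Finset.Ico r (r + N), ∑' k : ℤ, f (l + k * N) := by
  set e := Int.residueEquiv r N hN
  have hclass : ∀ l : ℤ, Summable fun k : ℤ => f (l + k * N) :=
    fun l => hf.comp_injective fun k k' h => by simpa [hN.ne'] using h
  calc ∑' m, f m = ∑' p, f (e p) := e.tsum_eq f |>.symm
    _ = ∑' (l : Finset.Ico r (r + N)) (k : ℤ), f (l + k * N) :=
      (e.summable_iff.mpr hf).tsum_prod' fun l => hclass l
    _ = _ := Finset.tsum_subtype _ fun l => ∑' k : ℤ, f (l + k * N)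

lemma summable_cexp_neg_mul_sq_add_mul_I {a : ℝ} (ha : 0 < a) (t : ℝ) :
    Summable fun n : ℤ => cexp (-π * a * n ^ 2 + 2 * π * t * n * I) := by
  refine .of_norm ((summable_exp_neg_mul_add_mul_sq (by positivity : 0 < π * a) 0
    one_ne_zero).congr fun n => ?_)
  have : -π * a * (n : ℂ) ^ 2 + 2 * π * t * n * I =
      ((-(π * a * (0 + n * 1) ^ 2) : ℝ) : ℂ) + ((2 * π * t * n : ℝ) : ℂ) * I := by
    push_cast; ring
  rw [this, Complex.exp_add, norm_mul, norm_exp_ofReal, norm_exp_ofReal_mul_I, mul_one, mul_one]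

/-- Poisson summation for a Gaussian modulated by a real frequency `t`. -/
lemma tsum_cexp_neg_mul_sq_add_mul_I {a : ℝ} (ha : 0 < a) (t : ℝ) :
    ∑' n : ℤ, cexp (-π * a * n ^ 2 + 2 * π * t * n * I) =
      (((√a)⁻¹ * ∑' n : ℤ, rexp (-π * (t + n) ^ 2 / a) : ℝ) : ℂ) := by
  have hroot : (a : ℂ) ^ (1 / 2 : ℂ) = ((√a : ℝ) : ℂ) := by
    rw [sqrt_eq_rpow, ofReal_cpow ha.le]; norm_num
  have hterm (n : ℤ) :
      cexp (-π / a * (n + I * (t * I)) ^ 2) = rexp (-π * (t + (-n : ℤ)) ^ 2 / a) := by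
    rw [mul_left_comm, I_mul_I, ofReal_exp]; push_cast; ring_nf
  calc ∑' n : ℤ, cexp (-π * a * n ^ 2 + 2 * π * t * n * I)
      = 1 / (a : ℂ) ^ (1 / 2 : ℂ) * ∑' n : ℤ, cexp (-π / a * (n + I * (t * I)) ^ 2) := by
        rw [← Complex.tsum_exp_neg_quadratic (by rwa [ofReal_re]) (t * I)]
        exact tsum_congr fun n => by ring_nf
    _ = (((√a)⁻¹ * ∑' n : ℤ, rexp (-π * (t + n) ^ 2 / a) : ℝ) : ℂ) := by
        rw [hroot, one_div, ofReal_mul, ofReal_inv, ofReal_tsum, tsum_congr hterm]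
        exact congrArg _ ((Equiv.neg ℤ).tsum_eq fun n : ℤ => (rexp (-π * (t + n) ^ 2 / a) : ℂ))

-- The phase `e^{iπjm/L}` has period `2L` in `m`.
lemma cexp_modulated_gaussian_add_mul_two_mul {L : ℤ} (hL : L ≠ 0) {δz : ℝ} (hδz : δz ≠ 0)
    (j l k : ℤ) :
    cexp (-π * (π / (L * δz) ^ 2 : ℝ) * ((l + k * (2 * L) : ℤ) : ℂ) ^ 2 +
        2 * π * (j / (2 * L) : ℝ) * ((l + k * (2 * L) : ℤ) : ℂ) * I) =
      cexp (π * I * j * l / L) * rexp (-(π ^ 2 * ((l : ℝ) + 2 * k * L) ^ 2) / (L ^ 2 * δz ^ 2)) := by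
  rw [ofReal_exp, ← Complex.exp_add, Complex.exp_eq_exp_iff_exists_int]
  refine ⟨j * k, ?_⟩
  have : (L : ℂ) ≠ 0 := by exact_mod_cast hL
  have : (δz : ℂ) ≠ 0 := by exact_mod_cast hδz
  push_cast; field_simp; ring

/-- discrete Fourier duality of periodized Gaussians, Appendix B:
with `c_l := ∑_{k∈ℤ} exp(−π²(l+2kL)²/(L²δz²))` and `d_l := ∑_{k∈ℤ} exp(−((l+2kL)δz)²/4)`
(both series converge absolutely), for every integer `j`,
`d_j = (√π/(L·δz)) ∑_{l=−L}^{L−1} e^{iπjl/L} c_l`. -/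
theorem stmt_18 (L : ℤ) (hL : 1 ≤ L) (δz : ℝ) (hδz : 0 < δz) :
    (∀ l : ℤ, Summable fun k : ℤ =>
      Real.exp (-(Real.pi ^ 2 * ((l : ℝ) + 2 * k * L) ^ 2) / ((L : ℝ) ^ 2 * δz ^ 2))) ∧
    (∀ l : ℤ, Summable fun k : ℤ =>
      Real.exp (-(((l : ℝ) + 2 * k * L) * δz) ^ 2 / 4)) ∧
    ∀ j : ℤ,
      ((∑' k : ℤ, Real.exp (-(((j : ℝ) + 2 * k * L) * δz) ^ 2 / 4) : ℝ) : ℂ) =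
        ((Real.sqrt Real.pi / ((L : ℝ) * δz) : ℝ) : ℂ) *
          ∑ l ∈ Finset.Icc (-L) (L - 1),
            Complex.exp ((Real.pi : ℂ) * Complex.I * (j : ℂ) * (l : ℂ) / (L : ℂ)) *
              ((∑' k : ℤ, Real.exp
                (-(Real.pi ^ 2 * ((l : ℝ) + 2 * k * L) ^ 2) / ((L : ℝ) ^ 2 * δz ^ 2)) : ℝ) : ℂ) := by
  have hL0 : (0 : ℝ) < L := by exact_mod_cast hL
  refine ⟨fun l => ?_, fun l => ?_, fun j => ?_⟩
  · refine (summable_exp_neg_mul_add_mul_sq (c := π ^ 2 / (L ^ 2 * δz ^ 2)) (by positivity) l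
      (s := 2 * L) (by positivity)).congr fun k => ?_
    congr 1; field_simp
  · refine (summable_exp_neg_mul_add_mul_sq (c := δz ^ 2 / 4) (by positivity) l
      (s := 2 * L) (by positivity)).congr fun k => ?_
    congr 1; field_simp
  set a : ℝ := π / (L * δz) ^ 2
  have hsqrt : √a = √π / (L * δz) := by rw [sqrt_div' _ (by positivity), sqrt_sq (by positivity)]
  have hsqrt_ne : √a ≠ 0 := by rw [hsqrt]; positivity
  have hdual (n : ℤ) :
      rexp (-π * (j / (2 * L) + n) ^ 2 / a) = rexp (-(((j : ℝ) + 2 * n * L) * δz) ^ 2 / 4) := by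
    congr 1; simp only [a]; field_simp; ring
  have hIcc : Finset.Icc (-L) (L - 1) = Finset.Ico (-L) (-L + 2 * L) := by
    ext; simp only [Finset.mem_Icc, Finset.mem_Ico]; omega
  calc ((∑' k : ℤ, rexp (-(((j : ℝ) + 2 * k * L) * δz) ^ 2 / 4) : ℝ) : ℂ)
      = (√a : ℂ) * (((√a)⁻¹ * ∑' n : ℤ, rexp (-π * (j / (2 * L) + n) ^ 2 / a) : ℝ) : ℂ) := by
        rw [tsum_congr hdual, ← ofReal_mul, mul_inv_cancel_left₀ hsqrt_ne]
    _ = (√a : ℂ) * ∑' m : ℤ, cexp (-π * a * m ^ 2 + 2 * π * (j / (2 * L) : ℝ) * m * I) := by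
        rw [tsum_cexp_neg_mul_sq_add_mul_I (by positivity)]
    _ = _ := by
        rw [Int.tsum_eq_sum_Ico_tsum (summable_cexp_neg_mul_sq_add_mul_I (by positivity) _) (-L)
          (by omega : 0 < 2 * L), hsqrt, ← hIcc]
        refine congrArg _ (Finset.sum_congr rfl fun l _ => ?_)
        simp_rw [a, cexp_modulated_gaussian_add_mul_two_mul (L := L) (by omega) hδz.ne', ofReal_tsum,
          tsum_mul_left]
end

section
/- Let 0 < ε ≤ 1/5 and let T be a real number with T² ≥ 4·log(1/ε). Then 1 ≤ ∑_{l∈ℤ} exp(−(l·T)²/2) ≤ 1 + 3ε². -/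
/-!
Write `r = exp (-T² / 2)`. Since `n² ≥ n` for `n ∈ ℕ`, the term `exp (-(n T)² / 2)` is at most
`rⁿ`, so the even series over `ℤ` is bounded by `1 + 2 r / (1 - r)`. The hypothesis on `T` says
exactly `r ≤ ε²`, and `ε² ≤ 1/25` makes `2 r / (1 - r) ≤ (25/12) ε² ≤ 3 ε²`.
-/

open Real

namespace Function.Even

variable {f : ℤ → ℝ} {r : ℝ}

lemma summable_of_le_geometric (heven : f.Even) (hf : 0 ≤ f) (hr0 : 0 ≤ r) (hr : r < 1)
    (hle : ∀ n : ℕ, f (n + 1) ≤ r ^ (n + 1)) : Summable f := by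
  have hsucc : Summable fun n : ℕ => f (n + 1) :=
    .of_nonneg_of_le (fun _ => hf _) hle
      ((summable_nat_add_iff 1).mpr (summable_geometric_of_lt_one hr0 hr))
  have hnat : Summable fun n : ℕ => f n :=
    (summable_nat_add_iff 1).mp (by exact_mod_cast hsucc)
  exact .of_nat_of_neg hnat (by simpa only [heven _] using hnat)

lemma tsum_le_of_le_geometric (heven : f.Even) (hf : 0 ≤ f) (hr0 : 0 ≤ r) (hr : r < 1)
    (hle : ∀ n : ℕ, f (n + 1) ≤ r ^ (n + 1)) : ∑' l, f l ≤ f 0 + 2 * (r / (1 - r)) := by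
  have hgeom : Summable fun n : ℕ => r ^ (n + 1) :=
    (summable_nat_add_iff 1).mpr (summable_geometric_of_lt_one hr0 hr)
  rw [tsum_int_eq_zero_add_two_mul_tsum_pnat heven (heven.summable_of_le_geometric hf hr0 hr hle),
    tsum_pnat_eq_tsum_succ (f := fun n : ℕ => f n), two_nsmul]
  have htail : ∑' n : ℕ, f ((n + 1 : ℕ) : ℤ) ≤ r / (1 - r) :=
    calc ∑' n : ℕ, f ((n + 1 : ℕ) : ℤ)
        ≤ ∑' n : ℕ, r ^ (n + 1) :=
          Summable.tsum_le_tsum (by exact_mod_cast hle) (.of_nonneg_of_le (fun _ => hf _)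
            (by exact_mod_cast hle) hgeom) hgeom
      _ = r / (1 - r) := by
          simp only [pow_succ', tsum_mul_left, tsum_geometric_of_lt_one hr0 hr, div_eq_mul_inv]
  linarith

end Function.Even

lemma exp_neg_mul_sq_le_pow (T : ℝ) (n : ℕ) :
    exp (-((n : ℝ) * T) ^ 2 / 2) ≤ exp (-T ^ 2 / 2) ^ n := by
  rw [← exp_nat_mul, exp_le_exp]
  have hn : (n : ℝ) ≤ (n : ℝ) ^ 2 := by exact_mod_cast Nat.le_self_pow two_ne_zero n
  nlinarith [sq_nonneg T]

lemma exp_neg_sq_div_two_le_sq {ε T : ℝ} (hε : 0 < ε) (hT : 4 * log (1 / ε) ≤ T ^ 2) :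
    exp (-T ^ 2 / 2) ≤ ε ^ 2 := by
  rw [← exp_log (pow_pos hε 2), exp_le_exp, log_pow]
  rw [one_div, log_inv] at hT
  linarith

/-- normalization estimate, Appendix B, Eq. (B13): for `0 < ε ≤ 1/5` and
`T² ≥ 4 log(1/ε)`, `1 ≤ ∑_{l∈ℤ} exp(−(lT)²/2) ≤ 1 + 3ε²`. -/
theorem stmt_19 (ε T : ℝ) (hε : 0 < ε) (hε' : ε ≤ 1 / 5)
    (hT : 4 * Real.log (1 / ε) ≤ T ^ 2) :
    1 ≤ (∑' l : ℤ, Real.exp (-((l : ℝ) * T) ^ 2 / 2)) ∧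
      (∑' l : ℤ, Real.exp (-((l : ℝ) * T) ^ 2 / 2)) ≤ 1 + 3 * ε ^ 2 := by
  set f : ℤ → ℝ := fun l => exp (-((l : ℝ) * T) ^ 2 / 2)
  set r := exp (-T ^ 2 / 2)
  have heven : f.Even := fun l => by simp only [f, Int.cast_neg, neg_mul, neg_sq]
  have hf : 0 ≤ f := fun l => (exp_pos _).le
  have hr_le : r ≤ ε ^ 2 := exp_neg_sq_div_two_le_sq hε hT
  have hε_sq : ε ^ 2 ≤ 1 / 25 := by nlinarith
  have hr : r < 1 := by linarith
  have hle (n : ℕ) : f (n + 1) ≤ r ^ (n + 1) := by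
    simpa [f] using exp_neg_mul_sq_le_pow T (n + 1)
  have hf0 : f 0 = 1 := by simp [f]
  refine ⟨hf0 ▸ (heven.summable_of_le_geometric hf (exp_pos _).le hr hle).le_tsum 0
    fun l _ => hf l, ?_⟩
  have htail : 2 * (r / (1 - r)) ≤ 3 * ε ^ 2 := by
    rw [← mul_div_assoc, div_le_iff₀ (by linarith)]
    nlinarith [mul_le_mul_of_nonneg_left (hr_le.trans hε_sq) (sq_nonneg ε)]
  linarith [heven.tsum_le_of_le_geometric hf (exp_pos _).le hr hle]
end
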